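/- arXiv:2209.14336 — 11 statements merged into one kernel-verified Lean document; each statement's English description precedes it below -/
import Mathlib

section
/- Let U ⊆ ℂ be open, g : U → ℂ holomorphic with g'(z) ≠ 0 for all z ∈ U, and f : U → ℝ twice continuously differentiable. Set T = 1 + |g|² and h = f/T. Then the pointwise identity Δh + (8|g'|²/T²) h = (|g'|²/T²) ( T·Δf/|g'|² − 4⟨∇f, g/g'⟩ + 4f ) holds on U, where ∇f denotes the complex number f_{,1} + i f_{,2} and ⟨w₁,w₂⟩ = Re(w̄₁ w₂). -/
/-! Writing `f = h · T`, the product rule for the Laplacian yields the quotient rule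
`Δ(f/T) = Δf/T - 2⟨∇f, ∇T⟩/T² - f ΔT/T² + 2f|∇T|²/T³`. For `T = 1 + |g|²` with `g` holomorphic,
`∇T = 2 g conj g'`, so `|∇T|² = 4|g|²|g'|²`, and `ΔT = 4|g'|²`: the second directional derivative
of `|g|²` along `v` is `2|v g'|² + 2⟨g, v² g''⟩`, and the `g''` terms cancel between `v = 1` and
`v = i`. Substituting these into the quotient rule leaves a polynomial identity. -/

open Complex

noncomputable section

/-- Euclidean inner product on ℂ ≅ ℝ²: ⟨w₁,w₂⟩ = Re(w̄₁ w₂). -/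
def inn (w₁ w₂ : ℂ) : ℝ := ((starRingEnd ℂ) w₁ * w₂).re

/-- Partial derivative in u (z = u + iv). -/
def pd1 (f : ℂ → ℝ) (z : ℂ) : ℝ := fderiv ℝ f z 1
/-- Partial derivative in v (z = u + iv). -/
def pd2 (f : ℂ → ℝ) (z : ℂ) : ℝ := fderiv ℝ f z Complex.I
/-- Euclidean Laplacian Δf = f_{,11} + f_{,22}. -/
def lap (f : ℂ → ℝ) (z : ℂ) : ℝ := pd1 (pd1 f) z + pd2 (pd2 f) z

/-- Partial derivative in u of an ℝ³ ≅ ℂ × ℝ valued map. -/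
def pdv1 (f : ℂ → ℂ × ℝ) (z : ℂ) : ℂ × ℝ := fderiv ℝ f z 1
/-- Partial derivative in v of an ℝ³ ≅ ℂ × ℝ valued map. -/
def pdv2 (f : ℂ → ℂ × ℝ) (z : ℂ) : ℂ × ℝ := fderiv ℝ f z Complex.I
/-- Euclidean inner product on ℝ³ ≅ ℂ × ℝ. -/
def inn3 (p q : ℂ × ℝ) : ℝ := inn p.1 q.1 + p.2 * q.2

open Filter Topology RealInnerProductSpace

section
variable {E : Type*} [NormedAddCommGroup E] [NormedSpace ℝ E]

theorem ContDiffAt.differentiableAt_fderiv_apply {F : Type*} [NormedAddCommGroup F]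
    [NormedSpace ℝ F] {f : E → F} {z : E} (hf : ContDiffAt ℝ 2 f z) (v : E) :
    DifferentiableAt ℝ (fun w => fderiv ℝ f w v) z :=
  ((hf.fderiv_right (m := 1) (by norm_num)).differentiableAt (by norm_num)).clm_apply
    (differentiableAt_const v)

theorem ContDiffAt.eventually_differentiableAt {F : Type*} [NormedAddCommGroup F]
    [NormedSpace ℝ F] {f : E → F} {z : E} (hf : ContDiffAt ℝ 2 f z) :
    ∀ᶠ w in 𝓝 z, DifferentiableAt ℝ f w :=
  (hf.eventually (by simp)).mono fun _ hw => hw.differentiableAt (by norm_num)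

theorem fderiv_fun_mul_apply {a b : E → ℝ} {z : E} (ha : DifferentiableAt ℝ a z)
    (hb : DifferentiableAt ℝ b z) (v : E) :
    fderiv ℝ (fun w => a w * b w) z v = fderiv ℝ a z v * b z + a z * fderiv ℝ b z v := by
  rw [fderiv_fun_mul ha hb]
  simp only [add_apply, smul_apply, smul_eq_mul]
  ring

theorem fderiv_fderiv_apply_mul {a b : E → ℝ} {z : E} (ha : ContDiffAt ℝ 2 a z)
    (hb : ContDiffAt ℝ 2 b z) (v : E) :
    fderiv ℝ (fun w => fderiv ℝ (fun x => a x * b x) w v) z v =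
      fderiv ℝ (fun w => fderiv ℝ a w v) z v * b z + 2 * (fderiv ℝ a z v * fderiv ℝ b z v)
        + a z * fderiv ℝ (fun w => fderiv ℝ b w v) z v := by
  have hprod : (fun w => fderiv ℝ (fun x => a x * b x) w v) =ᶠ[𝓝 z]
      fun w => fderiv ℝ a w v * b w + a w * fderiv ℝ b w v := by
    filter_upwards [ha.eventually_differentiableAt, hb.eventually_differentiableAt]
      with w haw hbw using fderiv_fun_mul_apply haw hbw v
  have ha1 := ha.differentiableAt_fderiv_apply v
  have hb1 := hb.differentiableAt_fderiv_apply v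
  have ha0 : DifferentiableAt ℝ a z := ha.differentiableAt (by norm_num)
  have hb0 : DifferentiableAt ℝ b z := hb.differentiableAt (by norm_num)
  rw [hprod.fderiv_eq, fderiv_fun_add (ha1.fun_mul hb0) (ha0.fun_mul hb1), add_apply,
    fderiv_fun_mul_apply ha1 hb0, fderiv_fun_mul_apply ha0 hb1]
  ring

variable {F : Type*} [NormedAddCommGroup F] [InnerProductSpace ℝ F]

theorem fderiv_fun_norm_sq_apply {g : E → F} {w : E} (hg : DifferentiableAt ℝ g w) (v : E) :
    fderiv ℝ (fun x => ‖g x‖ ^ 2) w v = 2 * ⟪g w, fderiv ℝ g w v⟫ := by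
  rw [hg.hasFDerivAt.norm_sq.fderiv]
  simp

theorem fderiv_fderiv_apply_norm_sq {g : E → F} {z : E} (hg : ContDiffAt ℝ 2 g z) (v : E) :
    fderiv ℝ (fun w => fderiv ℝ (fun x => ‖g x‖ ^ 2) w v) z v =
      2 * (‖fderiv ℝ g z v‖ ^ 2 + ⟪g z, fderiv ℝ (fun w => fderiv ℝ g w v) z v⟫) := by
  have hfirst : (fun w => fderiv ℝ (fun x => ‖g x‖ ^ 2) w v) =ᶠ[𝓝 z]
      fun w => 2 * ⟪g w, fderiv ℝ g w v⟫ :=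
    hg.eventually_differentiableAt.mono fun w hw => fderiv_fun_norm_sq_apply hw v
  have hd := ((hg.differentiableAt (by norm_num)).hasFDerivAt.inner ℝ
    (hg.differentiableAt_fderiv_apply v).hasFDerivAt).const_mul 2
  rw [hfirst.fderiv_eq, hd.fderiv]
  simp only [smul_apply, ContinuousLinearMap.comp_apply, ContinuousLinearMap.prod_apply,
    fderivInnerCLM_apply, real_inner_self_eq_norm_sq, smul_eq_mul]
  ring

end

theorem inn_eq_inner (w₁ w₂ : ℂ) : inn w₁ w₂ = ⟪w₁, w₂⟫ := by
  rw [Complex.inner, inn, mul_comm]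

theorem inn_ofReal_add_mul_I_div (x y : ℝ) (a b : ℂ) :
    inn (x + y * I) (a / b) = (x * inn a b + y * inn a (b * I)) / ‖b‖ ^ 2 := by
  simp only [inn, Complex.sq_norm, div_re, div_im, mul_re, mul_im, conj_re, conj_im, add_re,
    add_im, ofReal_re, ofReal_im, I_re, I_im, normSq_apply]
  ring

theorem inn_sq_add_inn_mul_I_sq (a b : ℂ) :
    inn a b ^ 2 + inn a (b * I) ^ 2 = ‖a‖ ^ 2 * ‖b‖ ^ 2 := by
  simp only [inn, Complex.sq_norm, mul_re, mul_im, conj_re, conj_im, I_re, I_im, normSq_apply]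
  ring

theorem HasDerivAt.fderiv_real_apply {g : ℂ → ℂ} {g' w : ℂ} (hg : HasDerivAt g g' w) (v : ℂ) :
    fderiv ℝ g w v = g' * v := by
  rw [hg.complexToReal_fderiv.fderiv]
  simp

theorem AnalyticAt.fderiv_fderiv_real_apply {g : ℂ → ℂ} {z : ℂ} (hg : AnalyticAt ℂ g z)
    (v : ℂ) : fderiv ℝ (fun w => fderiv ℝ g w v) z v = deriv (deriv g) z * v * v := by
  have hfirst : (fun w => fderiv ℝ g w v) =ᶠ[𝓝 z] fun w => deriv g w * v :=
    hg.eventually_analyticAt.mono fun w hw =>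
      hw.differentiableAt.hasDerivAt.fderiv_real_apply v
  rw [hfirst.fderiv_eq,
    (hg.deriv.differentiableAt.hasDerivAt.mul_const v).fderiv_real_apply v]

theorem HasDerivAt.pd1_norm_sq {g : ℂ → ℂ} {g' z : ℂ} (hg : HasDerivAt g g' z) :
    pd1 (fun w => ‖g w‖ ^ 2) z = 2 * inn (g z) g' := by
  rw [pd1, fderiv_fun_norm_sq_apply (hg.differentiableAt.restrictScalars ℝ), hg.fderiv_real_apply,
    mul_one, inn_eq_inner]

theorem HasDerivAt.pd2_norm_sq {g : ℂ → ℂ} {g' z : ℂ} (hg : HasDerivAt g g' z) :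
    pd2 (fun w => ‖g w‖ ^ 2) z = 2 * inn (g z) (g' * I) := by
  rw [pd2, fderiv_fun_norm_sq_apply (hg.differentiableAt.restrictScalars ℝ), hg.fderiv_real_apply,
    inn_eq_inner]

theorem AnalyticAt.lap_norm_sq {g : ℂ → ℂ} {z : ℂ} (hg : AnalyticAt ℂ g z) :
    lap (fun w => ‖g w‖ ^ 2) z = 4 * ‖deriv g z‖ ^ 2 := by
  have hg2 : ContDiffAt ℝ 2 g z := hg.contDiffAt.restrict_scalars ℝ
  have hg1 := hg.differentiableAt.hasDerivAt
  unfold lap pd2 pd1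
  rw [fderiv_fderiv_apply_norm_sq hg2, fderiv_fderiv_apply_norm_sq hg2,
    hg.fderiv_fderiv_real_apply, hg.fderiv_fderiv_real_apply, hg1.fderiv_real_apply,
    hg1.fderiv_real_apply]
  simp only [mul_one, mul_assoc, I_mul_I, mul_neg, inner_neg_right, norm_mul, norm_I]
  ring

theorem lap_congr_nhds {f₁ f₂ : ℂ → ℝ} {z : ℂ} (h : f₁ =ᶠ[𝓝 z] f₂) : lap f₁ z = lap f₂ z := by
  have h1 : pd1 f₁ =ᶠ[𝓝 z] pd1 f₂ := h.fderiv.mono fun w hw => by rw [pd1, pd1, hw]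
  have h2 : pd2 f₁ =ᶠ[𝓝 z] pd2 f₂ := h.fderiv.mono fun w hw => by rw [pd2, pd2, hw]
  rw [lap, lap, pd1, pd1, pd2, pd2, h1.fderiv_eq, h2.fderiv_eq]

theorem pd1_const_add (c : ℝ) (f : ℂ → ℝ) (z : ℂ) : pd1 (fun w => c + f w) z = pd1 f z := by
  rw [pd1, pd1, fderiv_const_add]

theorem pd2_const_add (c : ℝ) (f : ℂ → ℝ) (z : ℂ) : pd2 (fun w => c + f w) z = pd2 f z := by
  rw [pd2, pd2, fderiv_const_add]

theorem lap_const_add (c : ℝ) (f : ℂ → ℝ) (z : ℂ) : lap (fun w => c + f w) z = lap f z := by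
  unfold lap pd2 pd1
  simp only [fderiv_const_add]

theorem lap_mul {a b : ℂ → ℝ} {z : ℂ} (ha : ContDiffAt ℝ 2 a z) (hb : ContDiffAt ℝ 2 b z) :
    lap (fun w => a w * b w) z =
      lap a z * b z + 2 * (pd1 a z * pd1 b z + pd2 a z * pd2 b z) + a z * lap b z := by
  unfold lap pd2 pd1
  rw [fderiv_fderiv_apply_mul ha hb, fderiv_fderiv_apply_mul ha hb]
  ring

theorem lap_div {f T : ℂ → ℝ} {z : ℂ} (hf : ContDiffAt ℝ 2 f z) (hT : ContDiffAt ℝ 2 T z)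
    (hT0 : T z ≠ 0) :
    lap (fun w => f w / T w) z =
      lap f z / T z - 2 * (pd1 f z * pd1 T z + pd2 f z * pd2 T z) / T z ^ 2
        - f z * lap T z / T z ^ 2 + 2 * f z * (pd1 T z ^ 2 + pd2 T z ^ 2) / T z ^ 3 := by
  set h := fun w => f w / T w
  have hh : ContDiffAt ℝ 2 h z := hf.div hT hT0
  have hfhT : f =ᶠ[𝓝 z] fun w => h w * T w :=
    (hT.continuousAt.eventually_ne hT0).mono fun w hw => (div_mul_cancel₀ _ hw).symm
  have hlap : lap f z =
      lap h z * T z + 2 * (pd1 h z * pd1 T z + pd2 h z * pd2 T z) + h z * lap T z := by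
    rw [lap_congr_nhds hfhT, lap_mul hh hT]
  have hh1 := hh.differentiableAt (by norm_num)
  have hT1 := hT.differentiableAt (by norm_num)
  have hpd1 : pd1 f z = pd1 h z * T z + h z * pd1 T z := by
    rw [pd1, hfhT.fderiv_eq, fderiv_fun_mul_apply hh1 hT1]; rfl
  have hpd2 : pd2 f z = pd2 h z * T z + h z * pd2 T z := by
    rw [pd2, hfhT.fderiv_eq, fderiv_fun_mul_apply hh1 hT1]; rfl
  rw [hlap, hpd1, hpd2, hfhT.eq_of_nhds]
  field_simp
  ring

/-- the pointwise identity
Δh + (8|g'|²/T²)h = (|g'|²/T²)(T·Δf/|g'|² − 4⟨∇f, g/g'⟩ + 4f) for h = f/T, T = 1+|g|². -/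
theorem stmt_1 (U : Set ℂ) (hU : IsOpen U)
    (g g' : ℂ → ℂ) (hg : ∀ z ∈ U, HasDerivAt g (g' z) z) (hg' : ∀ z ∈ U, g' z ≠ 0)
    (f : ℂ → ℝ) (hf : ContDiffOn ℝ 2 f U) :
    ∀ z ∈ U,
      lap (fun w => f w / (1 + ‖g w‖ ^ 2)) z
          + (8 * ‖g' z‖ ^ 2 / (1 + ‖g z‖ ^ 2) ^ 2) *
            (f z / (1 + ‖g z‖ ^ 2))
        = (‖g' z‖ ^ 2 / (1 + ‖g z‖ ^ 2) ^ 2) *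
            ((1 + ‖g z‖ ^ 2) * lap f z / ‖g' z‖ ^ 2
              - 4 * inn ((pd1 f z : ℂ) + (pd2 f z : ℂ) * Complex.I) (g z / g' z)
              + 4 * f z) := by
  intro z hz
  have hgz : AnalyticAt ℂ g z :=
    DifferentiableOn.analyticAt (fun w hw => (hg w hw).differentiableAt.differentiableWithinAt)
      (hU.mem_nhds hz)
  have hT : ContDiffAt ℝ 2 (fun w => 1 + ‖g w‖ ^ 2) z :=
    contDiffAt_const.add ((hgz.contDiffAt.restrict_scalars ℝ).norm_sq ℝ)
  have hTz : 1 + ‖g z‖ ^ 2 ≠ 0 := by positivity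
  have hg'z : ‖g' z‖ ≠ 0 := norm_ne_zero_iff.mpr (hg' z hz)
  rw [lap_div (hf.contDiffAt (hU.mem_nhds hz)) hT hTz, pd1_const_add, pd2_const_add,
    lap_const_add, (hg z hz).pd1_norm_sq, (hg z hz).pd2_norm_sq, hgz.lap_norm_sq,
    (hg z hz).deriv, inn_ofReal_add_mul_I_div]
  field_simp
  linear_combination (8 * f z) * inn_sq_add_inn_mul_I_sq (g z) (g' z)
end
end

section
/- Let U ⊆ ℂ be an open simply connected set, g : U → ℂ holomorphic with g'(z) ≠ 0 for all z ∈ U, and c₁ ∈ ℝ. If A, B : U → ℂ are holomorphic functions with B'(z) = A'(z)g(z) − A(z)g'(z) + i c₁ g'(z) for all z ∈ U, then the function h = (⟨1,A⟩ + ⟨g,B⟩)/(1 + |g|²) satisfies the Helmholtz equation Δh + (8|g'|²/(1+|g|²)²) h = 0 on U. -/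
open Complex

noncomputable section

/-! ### Auxiliary Wirtinger-derivative calculus -/

/-- The ℝ-linear map `t ↦ p t + q conj t`. -/
def wlin (p q : ℂ) : ℂ →L[ℝ] ℂ :=
  p • (ContinuousLinearMap.id ℝ ℂ) + q • (Complex.conjCLE.toContinuousLinearMap)

@[simp] lemma wlin_apply (p q t : ℂ) : wlin p q t = p * t + q * (starRingEnd ℂ) t := by
  simp [wlin]

/-- `f` has Wirtinger derivatives `p = ∂f/∂z`, `q = ∂f/∂z̄` at `z`. -/
def HasWD (f : ℂ → ℂ) (p q z : ℂ) : Prop := HasFDerivAt f (wlin p q) z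

lemma HasWD.congr_coef {f : ℂ → ℂ} {p q z p' q' : ℂ} (h : HasWD f p q z) (hp : p = p')
    (hq : q = q') : HasWD f p' q' z := hp ▸ hq ▸ h

lemma hasWD_const (c z : ℂ) : HasWD (fun _ => c) 0 0 z := by
  have h : wlin 0 0 = 0 := by ext t; simp
  rw [HasWD, h]; exact hasFDerivAt_const c z

lemma HasDerivAt.hasWD {f : ℂ → ℂ} {f' z : ℂ} (h : HasDerivAt f f' z) : HasWD f f' 0 z := by
  have h2 := (h.hasFDerivAt).restrictScalars ℝ
  refine h2.congr_fderiv ?_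
  ext t; simp [mul_comm]

lemma HasWD.conj {f : ℂ → ℂ} {p q z : ℂ} (h : HasWD f p q z) :
    HasWD (fun w => (starRingEnd ℂ) (f w)) ((starRingEnd ℂ) q) ((starRingEnd ℂ) p) z := by
  have h2 := (Complex.conjCLE.toContinuousLinearMap.hasFDerivAt (x := f z)).comp z h
  refine HasFDerivAt.congr_fderiv h2 ?_
  ext t; simp [mul_comm, map_add]; ring

lemma HasWD.add {f g : ℂ → ℂ} {p q p' q' z : ℂ} (hf : HasWD f p q z) (hg : HasWD g p' q' z) :
    HasWD (fun w => f w + g w) (p + p') (q + q') z := by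
  have h2 := HasFDerivAt.add hf hg
  refine h2.congr_fderiv ?_
  ext t; simp; ring

lemma HasWD.neg {f : ℂ → ℂ} {p q z : ℂ} (hf : HasWD f p q z) :
    HasWD (fun w => -f w) (-p) (-q) z := by
  have h2 := HasFDerivAt.neg hf
  refine h2.congr_fderiv ?_
  ext t; simp; ring

lemma HasWD.mul {f g : ℂ → ℂ} {p q p' q' z : ℂ} (hf : HasWD f p q z) (hg : HasWD g p' q' z) :
    HasWD (fun w => f w * g w) (p * g z + f z * p') (q * g z + f z * q') z := by
  have h2 := HasFDerivAt.mul hf hg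
  refine h2.congr_fderiv ?_
  ext t; simp; ring

lemma HasWD.inv {f : ℂ → ℂ} {p q z : ℂ} (hf : HasWD f p q z) (h0 : f z ≠ 0) :
    HasWD (fun w => (f w)⁻¹) (-(p * (f z * f z)⁻¹)) (-(q * (f z * f z)⁻¹)) z := by
  have hi : HasFDerivAt Inv.inv
      ((ContinuousLinearMap.smulRight (1 : ℂ →L[ℂ] ℂ) (-(f z ^ 2)⁻¹)).restrictScalars ℝ)
      (f z) := ((hasDerivAt_inv h0).hasFDerivAt).restrictScalars ℝ
  have h2 := hi.comp z hf
  refine h2.congr_fderiv ?_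
  ext t; simp [pow_two]; ring

lemma pd1_of_hasWD {f : ℂ → ℂ} {p q w : ℂ} (h : HasWD f p q w) :
    pd1 (fun w => (f w).re) w = (p + q).re := by
  have h2 : HasFDerivAt (fun w => (f w).re) (Complex.reCLM.comp (wlin p q)) w :=
    (Complex.reCLM.hasFDerivAt (x := f w)).comp w h
  rw [pd1, h2.fderiv]
  simp

lemma pd2_of_hasWD {f : ℂ → ℂ} {p q w : ℂ} (h : HasWD f p q w) :
    pd2 (fun w => (f w).re) w = (p * Complex.I + -(q * Complex.I)).re := by
  have h2 : HasFDerivAt (fun w => (f w).re) (Complex.reCLM.comp (wlin p q)) w :=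
    (Complex.reCLM.hasFDerivAt (x := f w)).comp w h
  rw [pd2, h2.fderiv]
  simp [Complex.conj_I]

lemma pd1_congr' {g g' : ℂ → ℝ} {z : ℂ} (h : g =ᶠ[nhds z] g') : pd1 g z = pd1 g' z := by
  rw [pd1, pd1, h.fderiv_eq]

lemma pd2_congr' {g g' : ℂ → ℝ} {z : ℂ} (h : g =ᶠ[nhds z] g') : pd2 g z = pd2 g' z := by
  rw [pd2, pd2, h.fderiv_eq]

/-- The Laplacian of `Re f` equals `Re (2(∂z̄ P + ∂z Q))` where `(P,Q)` are the
Wirtinger derivatives of `f`. -/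
theorem lap_re (U : Set ℂ) (hU : IsOpen U) (z : ℂ) (hz : z ∈ U) (f P Q : ℂ → ℂ)
    (hW : ∀ w ∈ U, HasWD f (P w) (Q w) w) (pP qP pQ qQ : ℂ)
    (hP : HasWD P pP qP z) (hQ : HasWD Q pQ qQ z) :
    lap (fun w => (f w).re) z = (2 * (qP + pQ)).re := by
  have e1 : (pd1 fun w => (f w).re) =ᶠ[nhds z] fun w => (P w + Q w).re :=
    Filter.eventually_of_mem (hU.mem_nhds hz) (fun w hw => pd1_of_hasWD (hW w hw))
  have e2 : (pd2 fun w => (f w).re) =ᶠ[nhds z]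
      fun w => (P w * Complex.I + -(Q w * Complex.I)).re :=
    Filter.eventually_of_mem (hU.mem_nhds hz) (fun w hw => pd2_of_hasWD (hW w hw))
  have hPQ1 : HasWD (fun w => P w + Q w) (pP + pQ) (qP + qQ) z := hP.add hQ
  have hPQ2 : HasWD (fun w => P w * Complex.I + -(Q w * Complex.I))
      ((pP * Complex.I + P z * 0) + -(pQ * Complex.I + Q z * 0))
      ((qP * Complex.I + P z * 0) + -(qQ * Complex.I + Q z * 0)) z :=
    (hP.mul (hasWD_const Complex.I z)).add ((hQ.mul (hasWD_const Complex.I z)).neg)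
  have t1 : pd1 (pd1 (fun w => (f w).re)) z = ((pP + pQ) + (qP + qQ)).re :=
    (pd1_congr' e1).trans (pd1_of_hasWD hPQ1)
  have t2 := (pd2_congr' e2).trans (pd2_of_hasWD hPQ2)
  rw [lap, t1, t2, ← Complex.add_re]
  congr 1
  linear_combination (pP - qP - pQ + qQ) * Complex.I_sq

lemma hasDerivAt_of_deriv2 {U : Set ℂ} (hU : IsOpen U) {A A' : ℂ → ℂ}
    (hA : ∀ w ∈ U, HasDerivAt A (A' w) w) {z : ℂ} (hz : z ∈ U) :
    HasDerivAt A' (deriv (deriv A) z) z := by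
  have hAd : DifferentiableOn ℂ A U := fun w hw =>
    (hA w hw).differentiableAt.differentiableWithinAt
  have han := (hAd.analyticOnNhd hU).deriv
  have h1 : HasDerivAt (deriv A) (deriv (deriv A) z) z :=
    (han z hz).differentiableAt.hasDerivAt
  refine h1.congr_of_eventuallyEq ?_
  exact Filter.eventually_of_mem (hU.mem_nhds hz) fun w hw => ((hA w hw).deriv).symm

lemma rho_eq (g : ℂ → ℂ) (w : ℂ) :
    (1 : ℂ) + (starRingEnd ℂ) (g w) * g w = ((1 + ‖g w‖ ^ 2 : ℝ) : ℂ) := by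
  rw [Complex.sq_norm, Complex.ofReal_add, Complex.ofReal_one, ← Complex.mul_conj]
  ring

lemma rho_ne (g : ℂ → ℂ) (w : ℂ) : (1 : ℂ) + (starRingEnd ℂ) (g w) * g w ≠ 0 := by
  rw [rho_eq]
  exact_mod_cast Complex.ofReal_ne_zero.mpr (by positivity)

@[reducible] def Ff (g A B : ℂ → ℂ) (w : ℂ) : ℂ :=
  (A w + (starRingEnd ℂ) (g w) * B w) * ((1 : ℂ) + (starRingEnd ℂ) (g w) * g w)⁻¹

@[reducible] def Pf (g g' A A' B B' : ℂ → ℂ) (w : ℂ) : ℂ :=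
  (A' w + (starRingEnd ℂ) (g w) * B' w) * ((1 : ℂ) + (starRingEnd ℂ) (g w) * g w)⁻¹
  + (A w + (starRingEnd ℂ) (g w) * B w) *
    (-(((starRingEnd ℂ) (g w) * g' w) *
      ((((1 : ℂ) + (starRingEnd ℂ) (g w) * g w) * ((1 : ℂ) + (starRingEnd ℂ) (g w) * g w))⁻¹)))

@[reducible] def Qf (g g' A B : ℂ → ℂ) (w : ℂ) : ℂ :=
  ((starRingEnd ℂ) (g' w) * B w) * ((1 : ℂ) + (starRingEnd ℂ) (g w) * g w)⁻¹
  + (A w + (starRingEnd ℂ) (g w) * B w) *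
    (-((g w * (starRingEnd ℂ) (g' w)) *
      ((((1 : ℂ) + (starRingEnd ℂ) (g w) * g w) * ((1 : ℂ) + (starRingEnd ℂ) (g w) * g w))⁻¹)))

lemma hasWD_Ff {g g' A A' B B' : ℂ → ℂ} {w : ℂ} (hgw : HasDerivAt g (g' w) w)
    (hAw : HasDerivAt A (A' w) w) (hBw : HasDerivAt B (B' w) w) :
    HasWD (Ff g A B) (Pf g g' A A' B B' w) (Qf g g' A B w) w := by
  have hWg := hgw.hasWD
  have hWA := hAw.hasWD
  have hWB := hBw.hasWD
  have hWcg : HasWD (fun x => (starRingEnd ℂ) (g x)) 0 ((starRingEnd ℂ) (g' w)) w :=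
    hWg.conj.congr_coef (map_zero _) rfl
  have hr0 := rho_ne g w
  have hWrho := (hasWD_const 1 w).add (hWcg.mul hWg)
  have chain := (hWA.add (hWcg.mul hWB)).mul (hWrho.inv hr0)
  exact chain.congr_coef (by simp only [Pf]; ring) (by simp only [Qf]; ring)

lemma Ff_re (g A B : ℂ → ℂ) (w : ℂ) :
    (Ff g A B w).re
      = (((starRingEnd ℂ) 1 * A w).re + ((starRingEnd ℂ) (g w) * B w).re)
        / (1 + ‖g w‖ ^ 2) := by
  rw [Ff, rho_eq g w, ← Complex.ofReal_inv, mul_comm, Complex.re_ofReal_mul]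
  simp [Complex.add_re, div_eq_mul_inv]
  ring

set_option maxHeartbeats 2000000 in
/-- if B' = A'g − Ag' + i c₁ g', then h = (⟨1,A⟩+⟨g,B⟩)/(1+|g|²)
solves the Helmholtz equation Δh + (8|g'|²/(1+|g|²)²)h = 0. -/
theorem stmt_3 (U : Set ℂ) (hU : IsOpen U) (hUsc : SimplyConnectedSpace U)
    (g g' : ℂ → ℂ) (hg : ∀ z ∈ U, HasDerivAt g (g' z) z) (hg' : ∀ z ∈ U, g' z ≠ 0)
    (c₁ : ℝ) (A A' B B' : ℂ → ℂ)
    (hA : ∀ z ∈ U, HasDerivAt A (A' z) z) (hB : ∀ z ∈ U, HasDerivAt B (B' z) z)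
    (hrel : ∀ z ∈ U, B' z = A' z * g z - A z * g' z + Complex.I * (c₁ : ℂ) * g' z) :
    ∀ z ∈ U,
      lap (fun w => (inn 1 (A w) + inn (g w) (B w)) / (1 + ‖g w‖ ^ 2)) z
          + (8 * ‖g' z‖ ^ 2 / (1 + ‖g z‖ ^ 2) ^ 2) *
            ((inn 1 (A z) + inn (g z) (B z)) / (1 + ‖g z‖ ^ 2)) = 0 := by
  intro z hz
  have hrelz := hrel z hz
  have hRd := rho_eq g z
  have hR0 := rho_ne g z
  have hFfre := Ff_re g A B z
  have e2' : ((‖g' z‖ : ℝ) : ℂ) ^ 2 = (starRingEnd ℂ) (g' z) * g' z := by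
    rw [← Complex.ofReal_pow, Complex.sq_norm, ← Complex.mul_conj]; ring
  have hfun : (fun w => (inn 1 (A w) + inn (g w) (B w)) / (1 + ‖g w‖ ^ 2))
      = fun w => (Ff g A B w).re := by
    funext w
    rw [Ff_re]
    simp [inn]
  have hval : (inn 1 (A z) + inn (g z) (B z)) / (1 + ‖g z‖ ^ 2)
      = (Ff g A B z).re := by
    rw [Ff_re]
    simp [inn]
  rw [hfun, hval]
  -- Wirtinger derivatives of Ff on U
  have hW : ∀ w ∈ U, HasWD (Ff g A B) (Pf g g' A A' B B' w) (Qf g g' A B w) w :=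
    fun w hw => hasWD_Ff (hg w hw) (hA w hw) (hB w hw)
  -- atoms at z
  have hWg := (hg z hz).hasWD
  have hWA := (hA z hz).hasWD
  have hWB := (hB z hz).hasWD
  have hWA' := (hasDerivAt_of_deriv2 hU hA hz).hasWD
  have hWB' := (hasDerivAt_of_deriv2 hU hB hz).hasWD
  have hWg' := (hasDerivAt_of_deriv2 hU hg hz).hasWD
  have hWcg : HasWD (fun x => (starRingEnd ℂ) (g x)) 0 ((starRingEnd ℂ) (g' z)) z :=
    hWg.conj.congr_coef (map_zero _) rfl
  have hWcg' : HasWD (fun x => (starRingEnd ℂ) (g' x)) 0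
      ((starRingEnd ℂ) (deriv (deriv g) z)) z :=
    hWg'.conj.congr_coef (map_zero _) rfl
  have hrr0 := mul_ne_zero hR0 hR0
  have hWrho := (hasWD_const 1 z).add (hWcg.mul hWg)
  have hWrhoi := hWrho.inv hR0
  have hWrri := (hWrho.mul hWrho).inv hrr0
  have hPchain := ((hWA'.add (hWcg.mul hWB')).mul hWrhoi).add
    ((hWA.add (hWcg.mul hWB)).mul (((hWcg.mul hWg').mul hWrri).neg))
  have hQchain := ((hWcg'.mul hWB).mul hWrhoi).add
    ((hWA.add (hWcg.mul hWB)).mul (((hWg.mul hWcg').mul hWrri).neg))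
  -- abbreviations
  set a := A z with ha
  set a' := A' z with ha'
  set b := B z with hb
  set b' := B' z with hb'
  set G := g z with hG
  set G' := g' z with hG'
  set C := (starRingEnd ℂ) (g z) with hCdef
  set C' := (starRingEnd ℂ) (g' z) with hC'def
  set R := (1 : ℂ) + C * G with hRdef
  -- cleaned Wirtinger derivatives of P and Q at z
  have hP : HasWD _ _
      (C' * b' * R⁻¹ - (a' + C * b') * (C' * G) * (R * R)⁻¹
        - C' * b * (C * G') * (R * R)⁻¹
        - (a + C * b) * ((C' * G') * (R * R)⁻¹
            - 2 * C * C' * G * G' * R * ((R * R) * (R * R))⁻¹)) z :=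
    hPchain.congr_coef rfl (by ring)
  have hQ : HasWD _
      (C' * b' * R⁻¹ - C' * b * (C * G') * (R * R)⁻¹
        - (a' + C * b') * (G * C') * (R * R)⁻¹
        - (a + C * b) * ((G' * C') * (R * R)⁻¹
            - 2 * C * C' * G * G' * R * ((R * R) * (R * R))⁻¹)) _ z :=
    hQchain.congr_coef (by ring) rfl
  have L := lap_re U hU z hz (Ff g A B) (Pf g g' A A' B B') (Qf g g' A B) hW
    _ _ _ _ hP hQ
  rw [L, hFfre]
  have hR0' : (1 : ℂ) + C * G ≠ 0 := by rw [← hRdef]; exact hR0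
  have hC2 : 2 * ((C' * b' * R⁻¹ - (a' + C * b') * (C' * G) * (R * R)⁻¹
        - C' * b * (C * G') * (R * R)⁻¹
        - (a + C * b) * ((C' * G') * (R * R)⁻¹
            - 2 * C * C' * G * G' * R * ((R * R) * (R * R))⁻¹))
      + (C' * b' * R⁻¹ - C' * b * (C * G') * (R * R)⁻¹
        - (a' + C * b') * (G * C') * (R * R)⁻¹
        - (a + C * b) * ((G' * C') * (R * R)⁻¹
            - 2 * C * C' * G * G' * R * ((R * R) * (R * R))⁻¹)))
      = -8 * (C' * G') * (R * R * R)⁻¹ * (a + C * b)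
        + 4 * Complex.I * (c₁ : ℂ) * (C' * G') * (R * R)⁻¹ := by
    rw [hrelz, hRdef]
    field_simp [hR0']
    ring
  rw [hC2]
  have h8 : -8 * (C' * G') * (R * R * R)⁻¹ * (a + C * b)
        + 4 * Complex.I * (c₁ : ℂ) * (C' * G') * (R * R)⁻¹
      = ((-8 * ‖G'‖ ^ 2 / (1 + ‖G‖ ^ 2) ^ 3 : ℝ) : ℂ) * (a + C * b)
        + ((4 * c₁ * ‖G'‖ ^ 2 / (1 + ‖G‖ ^ 2) ^ 2 : ℝ) : ℂ)
          * Complex.I := by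
    rw [hRd, ← e2']
    have hdc : ((1 + ‖G‖ ^ 2 : ℝ) : ℂ) ≠ 0 := by
      rw [← hRd]; exact hR0
    push_cast
    field_simp
  rw [h8]
  have hd0 : (1 + ‖G‖ ^ 2 : ℝ) ≠ 0 := by positivity
  simp only [Complex.add_re, Complex.mul_re, Complex.ofReal_re, Complex.ofReal_im,
    Complex.I_re, Complex.I_im, map_one, Complex.one_re, Complex.one_im]
  field_simp
  ring
end
end

section
/- Let U ⊆ ℂ be a connected open set and let f, g, h : U → ℂ be holomorphic functions with g nonconstant. Then ⟨1,f⟩ + ⟨g,h⟩ = 0 identically on U (that is, Re f + Re(ḡh) ≡ 0) if and only if there exist real constants c₁, c₂ and a complex constant z₁ such that h = i c₁ g + z₁ and f = −z̄₁ g + i c₂ on U. -/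
/-!
Differentiating `Re f + Re (ḡ h) = 0` by `∂` and then by `∂̄` gives `Re (ḡ' h') = 0`. Near a point
where `g' ≠ 0` (one exists since `g` is not constant), `h' / g'` is therefore a holomorphic function
with values in `iℝ`, hence a constant `i c₁`; by the identity theorem `h' = i c₁ g'` on `U`, so
`h = i c₁ g + z₁`. Substituting, `Re (f + z̄₁ g) = 0`, and a holomorphic function with vanishing
real part on a connected open set is an imaginary constant `i c₂`.
-/

open Complex

noncomputable section

open ComplexConjugate Filter Topology

/-- Every `ℝ`-linear map `ℂ → ℂ` is `w ↦ a w + b w̄`; for a derivative, `a` and `b` are the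
Wirtinger derivatives `∂F` and `∂̄F`. -/
def wirtingerCLM (a b : ℂ) : ℂ →L[ℝ] ℂ :=
  a • ContinuousLinearMap.id ℝ ℂ + b • (conjCLE : ℂ →L[ℝ] ℂ)

@[simp]
theorem wirtingerCLM_apply (a b w : ℂ) : wirtingerCLM a b w = a * w + b * conj w :=
  rfl

theorem wirtingerCLM_add (a b c d : ℂ) :
    wirtingerCLM a b + wirtingerCLM c d = wirtingerCLM (a + c) (b + d) := by
  ext w : 1
  simp only [add_apply, wirtingerCLM_apply]
  ring

theorem HasDerivAt.hasFDerivAt_real {f : ℂ → ℂ} {f' z : ℂ} (hf : HasDerivAt f f' z) :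
    HasFDerivAt f (wirtingerCLM f' 0) z :=
  (hf.hasFDerivAt.restrictScalars ℝ).congr_fderiv <| by ext w : 1; simp [mul_comm]

theorem HasDerivAt.hasFDerivAt_conj_mul {g h : ℂ → ℂ} {g' h' z : ℂ} (hg : HasDerivAt g g' z)
    (hh : HasDerivAt h h' z) :
    HasFDerivAt (fun w => conj (g w) * h w) (wirtingerCLM (conj (g z) * h') (conj g' * h z)) z :=
  (hg.hasFDerivAt_real.star.mul hh.hasFDerivAt_real).congr_fderiv <| by
    ext w : 1
    simp only [add_apply, smul_apply, ContinuousLinearMap.comp_apply, wirtingerCLM_apply,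
      ContinuousLinearEquiv.coe_coe, starL'_apply, RCLike.star_def, smul_eq_mul, zero_mul, add_zero,
      map_mul]
    ring

theorem add_conj_eq_zero_of_hasFDerivAt_of_re_eq_zero {F : ℂ → ℂ} {a b z : ℂ}
    (hF : HasFDerivAt F (wirtingerCLM a b) z) (hre : ∀ᶠ w in 𝓝 z, (F w).re = 0) :
    a + conj b = 0 := by
  have hL := (reCLM.hasFDerivAt.comp z hF).unique
    ((hasFDerivAt_const (0 : ℝ) z).congr_of_eventuallyEq hre)
  have h1 := congrArg (· 1) hL
  have hI := congrArg (· I) hL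
  simp only [ContinuousLinearMap.comp_apply, wirtingerCLM_apply, reCLM_apply, zero_apply, mul_one,
    map_one, conj_I, mul_neg, add_re, mul_re, neg_re, I_re, I_im] at h1 hI
  apply Complex.ext <;> simp only [add_re, add_im, conj_re, conj_im, zero_re, zero_im] <;> linarith

theorem eq_zero_of_hasFDerivAt_of_eventuallyEq_zero {F : ℂ → ℂ} {a b z : ℂ}
    (hF : HasFDerivAt F (wirtingerCLM a b) z) (h0 : F =ᶠ[𝓝 z] 0) : a = 0 ∧ b = 0 := by
  have hL := hF.unique ((hasFDerivAt_const (0 : ℂ) z).congr_of_eventuallyEq h0)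
  have h1 := congrArg (· 1) hL
  have hI := congrArg (· I) hL
  simp only [wirtingerCLM_apply, mul_one, map_one, zero_apply, conj_I, mul_neg] at h1 hI
  have hab : a = b := mul_right_cancel₀ I_ne_zero (by linear_combination hI)
  exact ⟨by linear_combination (h1 + hab) / 2, by linear_combination (h1 - hab) / 2⟩

theorem deriv_add_conj_mul_eq_zero_of_re_eq_zero {U : Set ℂ} (hU : IsOpen U) {f g h : ℂ → ℂ}
    (hf : DifferentiableOn ℂ f U) (hg : DifferentiableOn ℂ g U) (hh : DifferentiableOn ℂ h U)
    (hre : ∀ z ∈ U, (f z + conj (g z) * h z).re = 0) :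
    ∀ z ∈ U, deriv f z + conj (g z) * deriv h z + conj (h z) * deriv g z = 0 := by
  intro z hz
  have hU' := hU.mem_nhds hz
  have hF := ((hf.differentiableAt hU').hasDerivAt.hasFDerivAt_real).add
    ((hg.differentiableAt hU').hasDerivAt.hasFDerivAt_conj_mul (hh.differentiableAt hU').hasDerivAt)
  rw [wirtingerCLM_add] at hF
  simpa [mul_comm] using
    add_conj_eq_zero_of_hasFDerivAt_of_re_eq_zero hF (eventually_of_mem hU' hre)

theorem conj_deriv_mul_add_conj_deriv_mul_eq_zero {U : Set ℂ} (hU : IsOpen U)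
    {p g₁ h₁ g₂ h₂ : ℂ → ℂ} (hp : DifferentiableOn ℂ p U)
    (hg₁ : DifferentiableOn ℂ g₁ U) (hh₁ : DifferentiableOn ℂ h₁ U)
    (hg₂ : DifferentiableOn ℂ g₂ U) (hh₂ : DifferentiableOn ℂ h₂ U)
    (h0 : ∀ z ∈ U, p z + conj (g₁ z) * h₁ z + conj (g₂ z) * h₂ z = 0) :
    ∀ z ∈ U, conj (deriv g₁ z) * h₁ z + conj (deriv g₂ z) * h₂ z = 0 := by
  intro z hz
  have hU' := hU.mem_nhds hz
  have hd {k : ℂ → ℂ} (hk : DifferentiableOn ℂ k U) := (hk.differentiableAt hU').hasDerivAt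
  have hF := ((hd hp).hasFDerivAt_real.add ((hd hg₁).hasFDerivAt_conj_mul (hd hh₁))).add
    ((hd hg₂).hasFDerivAt_conj_mul (hd hh₂))
  rw [wirtingerCLM_add, wirtingerCLM_add, zero_add] at hF
  exact (eq_zero_of_hasFDerivAt_of_eventuallyEq_zero hF (eventually_of_mem hU' h0)).2

/-- The complex form of `Δ (Re f + Re (ḡ h)) = 4 Re (ḡ' h')`: apply `∂`, then `∂̄`. -/
theorem re_conj_deriv_mul_deriv_eq_zero {U : Set ℂ} (hU : IsOpen U) {f g h : ℂ → ℂ}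
    (hf : DifferentiableOn ℂ f U) (hg : DifferentiableOn ℂ g U) (hh : DifferentiableOn ℂ h U)
    (hre : ∀ z ∈ U, (f z + conj (g z) * h z).re = 0) :
    ∀ z ∈ U, (conj (deriv g z) * deriv h z).re = 0 := by
  intro z hz
  have h2 := conj_deriv_mul_add_conj_deriv_mul_eq_zero hU (hf.deriv hU) hg (hh.deriv hU) hh
    (hg.deriv hU) (deriv_add_conj_mul_eq_zero_of_re_eq_zero hU hf hg hh hre) z hz
  have := congrArg Complex.re h2
  simp only [add_re, mul_re, conj_re, conj_im, zero_re] at this ⊢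
  linarith

theorem IsOpen.exists_eq_I_mul_of_re_eq_zero {U : Set ℂ} (hU : IsOpen U) (hU' : IsPreconnected U)
    {r : ℂ → ℂ} (hr : DifferentiableOn ℂ r U) (hre : ∀ z ∈ U, (r z).re = 0) :
    ∃ c : ℝ, ∀ z ∈ U, r z = I * c := by
  have hderiv : U.EqOn (deriv r) 0 := fun z hz => by
    have hU'' := hU.mem_nhds hz
    simpa using add_conj_eq_zero_of_hasFDerivAt_of_re_eq_zero
      (hr.differentiableAt hU'').hasDerivAt.hasFDerivAt_real (eventually_of_mem hU'' hre)
  obtain ⟨a, ha⟩ := hU.exists_is_const_of_deriv_eq_zero hU' hr hderiv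
  refine ⟨a.im, fun z hz => ?_⟩
  have : a.re = 0 := ha z hz ▸ hre z hz
  rw [ha z hz]
  apply Complex.ext <;> simp [this]

theorem exists_eq_I_mul_of_re_conj_mul_eq_zero {U : Set ℂ} (hU : IsOpen U)
    (hU' : IsPreconnected U) {p q : ℂ → ℂ} (hp : DifferentiableOn ℂ p U)
    (hq : DifferentiableOn ℂ q U) {z₀ : ℂ} (hz₀ : z₀ ∈ U) (hp₀ : p z₀ ≠ 0)
    (hre : ∀ z ∈ U, (conj (p z) * q z).re = 0) :
    ∃ c : ℝ, ∀ z ∈ U, q z = I * c * p z := by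
  have hnear : ∀ᶠ z in 𝓝 z₀, z ∈ U ∧ p z ≠ 0 :=
    (hU.eventually_mem hz₀).and ((hp.continuousOn.continuousAt (hU.mem_nhds hz₀)).eventually_ne hp₀)
  obtain ⟨ε, hε, hball⟩ := Metric.eventually_nhds_iff_ball.1 hnear
  have hquot : ∀ z ∈ Metric.ball z₀ ε, (q z / p z).re = 0 := fun z hz => by
    have := hre z (hball z hz).1
    simp only [mul_re, conj_re, conj_im] at this
    rw [div_re, ← add_div]
    exact div_eq_zero_iff.2 (.inl (by linarith))
  obtain ⟨c, hc⟩ := Metric.isOpen_ball.exists_eq_I_mul_of_re_eq_zero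
    (convex_ball z₀ ε).isPreconnected (r := fun z => q z / p z)
    ((hq.mono fun z hz => (hball z hz).1).div (hp.mono fun z hz => (hball z hz).1)
      fun z hz => (hball z hz).2) hquot
  refine ⟨c, fun z hz => (hq.analyticOnNhd hU).eqOn_of_preconnected_of_eventuallyEq
    (analyticOnNhd_const.mul (hp.analyticOnNhd hU)) hU' hz₀ ?_ hz⟩
  filter_upwards [Metric.ball_mem_nhds z₀ hε] with z hz
  rw [← hc z hz, div_mul_cancel₀ _ (hball z hz).2]

theorem re_conj_mul_I_mul_add (c : ℝ) (w z₁ : ℂ) :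
    (conj w * (I * c * w + z₁)).re = (conj z₁ * w).re := by
  simp only [mul_re, mul_im, add_re, add_im, conj_re, conj_im, I_re, I_im, ofReal_re, ofReal_im]
  ring

/-- Proposition 2.3: for holomorphic f, g, h on a connected open U with
g nonconstant, ⟨1,f⟩ + ⟨g,h⟩ ≡ 0 iff h = i c₁ g + z₁ and f = −z̄₁ g + i c₂. -/
theorem stmt_4 (U : Set ℂ) (hU : IsOpen U) (hconn : IsConnected U)
    (f g h : ℂ → ℂ)
    (hf : DifferentiableOn ℂ f U) (hg : DifferentiableOn ℂ g U)
    (hh : DifferentiableOn ℂ h U)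
    (hgnc : ¬ ∃ w : ℂ, ∀ z ∈ U, g z = w) :
    (∀ z ∈ U, inn 1 (f z) + inn (g z) (h z) = 0)
      ↔ ∃ (c₁ c₂ : ℝ) (z₁ : ℂ), ∀ z ∈ U,
          h z = Complex.I * (c₁ : ℂ) * g z + z₁ ∧
          f z = -(starRingEnd ℂ) z₁ * g z + Complex.I * (c₂ : ℂ) := by
  have hinn (z : ℂ) : inn 1 (f z) + inn (g z) (h z) = (f z + conj (g z) * h z).re := by
    simp [inn]
  simp only [hinn]
  constructor
  · intro hre
    obtain ⟨z₀, hz₀, hg₀⟩ : ∃ z ∈ U, deriv g z ≠ 0 := by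
      by_contra! hg'
      exact hgnc (hU.exists_is_const_of_deriv_eq_zero hconn.isPreconnected hg hg')
    obtain ⟨c₁, hc₁⟩ := exists_eq_I_mul_of_re_conj_mul_eq_zero hU hconn.isPreconnected
      (hg.deriv hU) (hh.deriv hU) hz₀ hg₀ (re_conj_deriv_mul_deriv_eq_zero hU hf hg hh hre)
    obtain ⟨z₁, hz₁⟩ := hU.exists_eq_add_of_deriv_eq hconn.isPreconnected hh
      (hg.const_mul (I * c₁)) fun z hz => by
        rw [hc₁ z hz, deriv_const_mul _ (hg.differentiableAt (hU.mem_nhds hz))]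
    have hre' : ∀ z ∈ U, (f z + conj z₁ * g z).re = 0 := fun z hz => by
      simpa only [hz₁ hz, add_re, re_conj_mul_I_mul_add] using hre z hz
    obtain ⟨c₂, hc₂⟩ := hU.exists_eq_I_mul_of_re_eq_zero hconn.isPreconnected
      (r := fun z => f z + conj z₁ * g z) (hf.add (hg.const_mul _)) hre'
    exact ⟨c₁, c₂, z₁, fun z hz => ⟨hz₁ hz, by linear_combination hc₂ z hz⟩⟩
  · rintro ⟨c₁, c₂, z₁, hfgh⟩ z hz
    obtain ⟨hz_h, hz_f⟩ := hfgh z hz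
    rw [hz_h, hz_f, add_re, re_conj_mul_I_mul_add]
    simp
end
end

section
/- Let U ⊆ ℂ be open and g : U → ℂ holomorphic. Define Y : U → ℝ³ ≅ ℂ × ℝ by Y = ( 2g/(1+|g|²), (1−|g|²)/(1+|g|²) ), i.e. the composition of g with the inverse stereographic projection from the south pole. Then |Y| = 1 on U and the Euclidean inner products of the partial derivatives of Y satisfy ⟨Y_{,i}, Y_{,j}⟩ = (4|g'|²/(1+|g|²)²) δ_{ij} for 1 ≤ i,j ≤ 2, where subscripts ,1 and ,2 denote partial differentiation in u and v with z = u + iv. -/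
open Complex

noncomputable section

/-!
`Y = σ ∘ g`, where `σ w = (c w • w, c w - 1)` with `c w = 2 / (1 + ‖w‖²)` is the inverse
stereographic projection `π₋⁻¹`. In any real inner product space, `c w * (1 + ‖w‖²) = 2` gives
`‖σ w‖ = 1`, and the differential `h ↦ (c • h - c² ⟪w, h⟫ • w, -c² ⟪w, h⟫)` is conformal with
factor `c²`. By the chain rule `Y_{,1} = Dσ (g')` and `Y_{,2} = Dσ (i g')`, and `g'`, `i g'` are
orthogonal of the same length `|g'|`.
-/

section InvStereo

variable {F : Type*} [NormedAddCommGroup F]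

def stereoFactor (w : F) : ℝ := 2 / (1 + ‖w‖ ^ 2)

lemma stereoFactor_mul_one_add_norm_sq (w : F) : stereoFactor w * (1 + ‖w‖ ^ 2) = 2 :=
  div_mul_cancel₀ _ (by positivity)

variable [InnerProductSpace ℝ F]

def invStereo (w : F) : F × ℝ := (stereoFactor w • w, stereoFactor w - 1)

lemma norm_sq_invStereo_fst_add_sq_snd (w : F) :
    ‖(invStereo w).1‖ ^ 2 + (invStereo w).2 ^ 2 = 1 := by
  have h := stereoFactor_mul_one_add_norm_sq w
  simp only [invStereo, norm_smul, Real.norm_eq_abs, mul_pow, sq_abs]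
  linear_combination (stereoFactor w) * h

lemma hasFDerivAt_stereoFactor (w : F) :
    HasFDerivAt stereoFactor (-(stereoFactor w ^ 2) • innerSL ℝ w) w := by
  have hs : 1 + ‖w‖ ^ 2 ≠ 0 := by positivity
  have h := ((hasDerivAt_inv hs).const_mul 2).comp_hasFDerivAt w
    ((hasStrictFDerivAt_norm_sq w).hasFDerivAt.const_add 1)
  rw [show stereoFactor = (fun t : ℝ => 2 * t⁻¹) ∘ fun x : F => 1 + ‖x‖ ^ 2 from
    funext fun _ => div_eq_mul_inv _ _]
  refine h.congr_fderiv ?_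
  ext v
  simp only [neg_smul, neg_apply, smul_apply, coe_innerSL_apply, nsmul_eq_mul, smul_eq_mul,
    Function.comp_apply, mul_pow, inv_pow]
  ring

lemma hasFDerivAt_invStereo (w : F) :
    HasFDerivAt invStereo
      ((stereoFactor w • ContinuousLinearMap.id ℝ F +
          (-(stereoFactor w ^ 2) • innerSL ℝ w).smulRight w).prod
        (-(stereoFactor w ^ 2) • innerSL ℝ w)) w :=
  ((hasFDerivAt_stereoFactor w).smul (hasFDerivAt_id w)).prodMk
    ((hasFDerivAt_stereoFactor w).sub_const 1)

lemma fderiv_invStereo_apply (w h : F) :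
    fderiv ℝ invStereo w h =
      (stereoFactor w • h - (stereoFactor w ^ 2 * inner ℝ w h) • w,
        -(stereoFactor w ^ 2 * inner ℝ w h)) := by
  simp [(hasFDerivAt_invStereo w).fderiv, sub_eq_add_neg]

lemma inner_fderiv_invStereo (w h k : F) :
    inner ℝ (fderiv ℝ invStereo w h).1 (fderiv ℝ invStereo w k).1 +
      (fderiv ℝ invStereo w h).2 * (fderiv ℝ invStereo w k).2 =
        stereoFactor w ^ 2 * inner ℝ h k := by
  have hc := stereoFactor_mul_one_add_norm_sq w
  simp only [fderiv_invStereo_apply, inner_sub_left, inner_sub_right, real_inner_smul_left,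
    real_inner_smul_right, real_inner_self_eq_norm_sq, real_inner_comm w h]
  linear_combination (stereoFactor w) ^ 3 * inner ℝ w h * inner ℝ w k * hc

end InvStereo

lemma inn_eq_inner_s5 (w z : ℂ) : inn w z = inner ℝ w z := by
  rw [Complex.inner, inn, mul_comm]

lemma invStereo_eq_div (w : ℂ) :
    invStereo w = (2 * w / ((1 + ‖w‖ ^ 2 : ℝ) : ℂ), (1 - ‖w‖ ^ 2) / (1 + ‖w‖ ^ 2)) := by
  have hs : 1 + ‖w‖ ^ 2 ≠ 0 := by positivity
  simp only [invStereo, stereoFactor, Prod.mk.injEq]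
  constructor
  · rw [Complex.real_smul, mul_div_right_comm, Complex.ofReal_div]
    push_cast
    ring
  · field_simp
    ring

lemma fderiv_comp_apply_of_hasDerivAt {E : Type*} [NormedAddCommGroup E] [NormedSpace ℝ E]
    {f : ℂ → E} {g : ℂ → ℂ} {g' z : ℂ} (hf : DifferentiableAt ℝ f (g z))
    (hg : HasDerivAt g g' z) (v : ℂ) :
    fderiv ℝ (f ∘ g) z v = fderiv ℝ f (g z) (v * g') := by
  rw [fderiv_comp z hf (hg.differentiableAt.restrictScalars ℝ),
    (hg.hasFDerivAt.restrictScalars ℝ).fderiv]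
  simp

theorem stmt_5_general (U : Set ℂ)
    (g g' : ℂ → ℂ) (hg : ∀ z ∈ U, HasDerivAt g (g' z) z) :
    let Y : ℂ → ℂ × ℝ := fun w =>
      (2 * g w / ((1 + ‖g w‖ ^ 2 : ℝ) : ℂ),
        (1 - ‖g w‖ ^ 2) / (1 + ‖g w‖ ^ 2))
    ∀ z ∈ U,
      Real.sqrt (inn3 (Y z) (Y z)) = 1 ∧
      inn3 (pdv1 Y z) (pdv1 Y z)
          = 4 * ‖g' z‖ ^ 2 / (1 + ‖g z‖ ^ 2) ^ 2 ∧
      inn3 (pdv2 Y z) (pdv2 Y z)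
          = 4 * ‖g' z‖ ^ 2 / (1 + ‖g z‖ ^ 2) ^ 2 ∧
      inn3 (pdv1 Y z) (pdv2 Y z) = 0 := by
  intro Y z hz
  have hY : Y = invStereo ∘ g := funext fun w => (invStereo_eq_div (g w)).symm
  have hDY (v : ℂ) : fderiv ℝ Y z v = fderiv ℝ invStereo (g z) (v * g' z) := by
    rw [hY]
    exact fderiv_comp_apply_of_hasDerivAt (hasFDerivAt_invStereo (g z)).differentiableAt
      (hg z hz) v
  have hfactor : stereoFactor (g z) ^ 2 = 4 / (1 + ‖g z‖ ^ 2) ^ 2 := by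
    rw [stereoFactor, div_pow]
    norm_num
  simp only [pdv1, pdv2, inn3, inn_eq_inner_s5, hDY, inner_fderiv_invStereo, hfactor]
  have horth : inner ℝ (g' z) (Complex.I * g' z) = 0 := by
    rw [Complex.inner, mul_assoc, mul_conj, I_mul_re, ofReal_im, neg_zero]
  refine ⟨?_, by simp only [one_mul, real_inner_self_eq_norm_sq]; ring,
    by simp only [real_inner_self_eq_norm_sq, norm_mul, norm_I, one_mul]; ring, by simp [horth]⟩
  rw [real_inner_self_eq_norm_sq, ← sq, hY, Function.comp_apply,
    norm_sq_invStereo_fst_add_sq_snd, Real.sqrt_one]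

/-- Y = π₋⁻¹ ∘ g satisfies |Y| = 1 and
⟨Y_{,i},Y_{,j}⟩ = (4|g'|²/(1+|g|²)²) δ_{ij} for 1 ≤ i,j ≤ 2. -/
theorem stmt_5 (U : Set ℂ) (hU : IsOpen U)
    (g g' : ℂ → ℂ) (hg : ∀ z ∈ U, HasDerivAt g (g' z) z) :
    let Y : ℂ → ℂ × ℝ := fun w =>
      (2 * g w / ((1 + ‖g w‖ ^ 2 : ℝ) : ℂ),
        (1 - ‖g w‖ ^ 2) / (1 + ‖g w‖ ^ 2))
    ∀ z ∈ U,
      Real.sqrt (inn3 (Y z) (Y z)) = 1 ∧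
      inn3 (pdv1 Y z) (pdv1 Y z)
          = 4 * ‖g' z‖ ^ 2 / (1 + ‖g z‖ ^ 2) ^ 2 ∧
      inn3 (pdv2 Y z) (pdv2 Y z)
          = 4 * ‖g' z‖ ^ 2 / (1 + ‖g z‖ ^ 2) ^ 2 ∧
      inn3 (pdv1 Y z) (pdv2 Y z) = 0 :=
  stmt_5_general U g g' hg
end
end

section
/- For any real constants a₁, a₂, the function h : ℝ² → ℝ defined by h(u,v) = a₁ − (a₂ + a₁(u−1)) tanh(u) satisfies the Helmholtz equation Δh + ( 8 e^{2u} / (1 + e^{2u})² ) h = 0, where Δh = h_{,11} + h_{,22}. -/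
/-! Since `h` depends only on `u = Re z`, its Laplacian is `h''(u)`. Writing `T = tanh u`, one has
`T' = 1 - T²` and the potential `8e^{2u}/(1+e^{2u})²` equals `2(1 - T²)`, so the equation becomes
a polynomial identity in `u` and `T`. -/

open Complex

noncomputable section

lemma eight_mul_exp_div_one_add_exp_sq (x : ℝ) :
    8 * Real.exp (2 * x) / (1 + Real.exp (2 * x)) ^ 2 = 2 * (1 - Real.tanh x ^ 2) := by
  have hsum : Real.exp x + Real.exp (-x) ≠ 0 := by positivity
  have hexp2 : Real.exp (2 * x) = Real.exp x ^ 2 := by rw [← Real.exp_nat_mul]; norm_num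
  rw [Real.tanh_eq, hexp2, Real.exp_neg]
  field_simp
  ring

lemma Real.hasDerivAt_tanh (x : ℝ) : HasDerivAt Real.tanh (1 - Real.tanh x ^ 2) x := by
  have hcosh : Real.cosh x ≠ 0 := (Real.cosh_pos x).ne'
  have hquot := (Real.hasDerivAt_sinh x).div (Real.hasDerivAt_cosh x) hcosh
  rw [show Real.tanh = Real.sinh / Real.cosh from funext Real.tanh_eq_sinh_div_cosh]
  refine hquot.congr_deriv ?_
  rw [Pi.div_apply]
  field_simp

section PartialDerivatives

variable {H H' : ℝ → ℝ} {d : ℝ} {z : ℂ}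

lemma pd1_comp_re (hH : HasDerivAt H d z.re) : pd1 (fun w => H w.re) z = d := by
  rw [pd1, show (fun w : ℂ => H w.re) = H ∘ Complex.re from rfl,
    (hH.hasFDerivAt.comp z Complex.reCLM.hasFDerivAt).fderiv]
  simp

lemma pd2_comp_re (hH : HasDerivAt H d z.re) : pd2 (fun w => H w.re) z = 0 := by
  rw [pd2, show (fun w : ℂ => H w.re) = H ∘ Complex.re from rfl,
    (hH.hasFDerivAt.comp z Complex.reCLM.hasFDerivAt).fderiv]
  simp

lemma lap_comp_re (hH : ∀ x, HasDerivAt H (H' x) x) (hH' : HasDerivAt H' d z.re) :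
    lap (fun w => H w.re) z = d := by
  have hpd1 : pd1 (fun w => H w.re) = fun w => H' w.re := funext fun w => pd1_comp_re (hH w.re)
  have hpd2 : pd2 (fun w => H w.re) = fun _ => 0 := funext fun w => pd2_comp_re (hH w.re)
  rw [lap, hpd1, hpd2, pd1_comp_re hH']
  simp [pd2]

end PartialDerivatives

/-- h(u,v) = a₁ − (a₂ + a₁(u−1)) tanh u solves
Δh + (8 e^{2u}/(1+e^{2u})²) h = 0. -/
theorem stmt_8 (a₁ a₂ : ℝ) :
    let h : ℂ → ℝ := fun z => a₁ - (a₂ + a₁ * (z.re - 1)) * Real.tanh z.re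
    ∀ z : ℂ,
      lap h z + (8 * Real.exp (2 * z.re) / (1 + Real.exp (2 * z.re)) ^ 2) * h z = 0 := by
  intro h z
  have hlin : ∀ x : ℝ, HasDerivAt (fun t => a₂ + a₁ * (t - 1)) a₁ x := fun x => by
    simpa using (((hasDerivAt_id x).sub_const 1).const_mul a₁).const_add a₂
  have hderiv : ∀ x : ℝ, HasDerivAt (fun t => a₁ - (a₂ + a₁ * (t - 1)) * Real.tanh t)
      (-((a₂ + a₁ * (x - 1)) * (1 - Real.tanh x ^ 2) + a₁ * Real.tanh x)) x := fun x =>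
    (((hlin x).mul (Real.hasDerivAt_tanh x)).const_sub a₁).congr_deriv (by ring)
  have hderiv2 : HasDerivAt
      (fun t => -((a₂ + a₁ * (t - 1)) * (1 - Real.tanh t ^ 2) + a₁ * Real.tanh t))
      (-(a₁ * (1 - Real.tanh z.re ^ 2)
        + (a₂ + a₁ * (z.re - 1)) * (-(2 * Real.tanh z.re * (1 - Real.tanh z.re ^ 2)))
        + a₁ * (1 - Real.tanh z.re ^ 2))) z.re := by
    have htanh_sq := (Real.hasDerivAt_tanh z.re).pow 2
    exact (((hlin z.re).mul ((htanh_sq.const_sub 1).congr_deriv (by ring))).add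
      ((Real.hasDerivAt_tanh z.re).const_mul a₁)).neg
  rw [lap_comp_re hderiv hderiv2, eight_mul_exp_div_one_add_exp_sq]
  ring
end
end

section
/- Let A, B : ℂ → ℂ be entire functions and c ∈ ℝ such that B'(z) = ( A'(z) − A(z) + i c ) e^z for all z, and define h : ℂ → ℝ by h(u+iv) = ( Re A(z) + Re( \overline{e^z} · B(z) ) ) / ( 1 + e^{2u} ). If h is independent of v, i.e. ∂h/∂v ≡ 0, then there exist real constants a₁, a₂ such that h(u+iv) = a₁ − ( a₂ + a₁(u−1) ) tanh(u) for all u, v. -/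
open Complex

noncomputable section

/-! ### Auxiliary toolkit -/

lemma deriv_entire {f : ℂ → ℂ} (hf : Differentiable ℂ f) : Differentiable ℂ (deriv f) :=
  ((contDiff_infty_iff_deriv.mp hf.contDiff).2).differentiable (by simp)

section tools
variable {f : ℂ → ℂ}

lemma ld_hol (hf : Differentiable ℂ f) (z w : ℂ) :
    HasDerivAt (fun t : ℝ => f (z + t • w)) (w * deriv f z) 0 := by
  have h1 : HasDerivAt (fun t : ℝ => z + t • w) w 0 := by
    simpa using ((hasDerivAt_id (0:ℝ)).smul_const w).const_add z
  have h2 : HasDerivAt f (deriv f z) (z + (0:ℝ) • w) := by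
    simpa using (hf _).hasDerivAt
  simpa [Function.comp_def, smul_eq_mul] using h2.scomp (0:ℝ) h1

lemma ld_conj (hf : Differentiable ℂ f) (z w : ℂ) :
    HasDerivAt (fun t : ℝ => (starRingEnd ℂ) (f (z + t • w)))
      ((starRingEnd ℂ) (w * deriv f z)) 0 := by
  simpa using (ld_hol hf z w).star

lemma hd_im {g : ℝ → ℂ} {d : ℂ} {t : ℝ} (h : HasDerivAt g d t) :
    HasDerivAt (fun s => (g s).im) d.im t := by
  simpa [Function.comp_def] using (Complex.imCLM.hasFDerivAt.comp_hasDerivAt t h)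

lemma hd_re {g : ℝ → ℂ} {d : ℂ} {t : ℝ} (h : HasDerivAt g d t) :
    HasDerivAt (fun s => (g s).re) d.re t := by
  simpa [Function.comp_def] using (Complex.reCLM.hasFDerivAt.comp_hasDerivAt t h)

lemma zero_of_const {g : ℝ → ℝ} {d : ℝ} (h : HasDerivAt g d 0) (h0 : ∀ t, g t = 0) : d = 0 := by
  have h1 : HasDerivAt g 0 0 := by
    have : g = fun _ => 0 := funext h0
    rw [this]; exact hasDerivAt_const _ _
  exact h.unique h1

lemma zero_of_constC {g : ℝ → ℂ} {d : ℂ} (h : HasDerivAt g d 0) (h0 : ∀ t, g t = 0) : d = 0 := by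
  have h1 : HasDerivAt g 0 0 := by
    have : g = fun _ => 0 := funext h0
    rw [this]; exact hasDerivAt_const _ _
  exact h.unique h1

lemma ld_E (z w : ℂ) :
    HasDerivAt (fun t : ℝ => ((Real.exp (2 * (z + t • w).re) : ℝ) : ℂ))
      (((2 * w.re * Real.exp (2 * z.re) : ℝ)) : ℂ) 0 := by
  have h1 : HasDerivAt (fun t : ℝ => 2 * (z + t • w).re) (2 * w.re) 0 := by
    have heq : (fun t : ℝ => 2 * (z + t • w).re) = fun t : ℝ => 2 * z.re + 2 * w.re * t := by
      funext t; simp [Complex.add_re, Complex.smul_re]; ring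
    rw [heq]
    simpa using ((hasDerivAt_id (0:ℝ)).const_mul (2*w.re)).const_add (2*z.re)
  have h2 : HasDerivAt (fun t : ℝ => Real.exp (2 * (z + t • w).re))
      (2 * w.re * Real.exp (2 * z.re)) 0 := by
    have := (Real.hasDerivAt_exp (2 * (z + (0:ℝ) • w).re)).scomp (0:ℝ) h1
    simpa [mul_comm, Function.comp_def] using this
  exact Complex.ofRealCLM.hasFDerivAt.comp_hasDerivAt (0:ℝ) h2

end tools

lemma Dpos (z : ℂ) : (0:ℝ) < 1 + Real.exp (2 * z.re) := by positivity

lemma hgg (z : ℂ) : (starRingEnd ℂ) (Complex.exp z) * Complex.exp z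
    = ((Real.exp (2 * z.re) : ℝ) : ℂ) := by
  rw [← Complex.exp_conj, ← Complex.exp_add]
  have h : (starRingEnd ℂ) z + z = ((2 * z.re : ℝ) : ℂ) := by
    rw [add_comm, Complex.add_conj]
  rw [h, Complex.ofReal_exp]

/-! ### Step 1: the `v`-independence gives a pointwise identity -/

lemma step1 (A B : ℂ → ℂ) (hA : Differentiable ℂ A) (hB : Differentiable ℂ B)
    (hyp : ∀ z : ℂ, fderiv ℝ (fun z : ℂ =>
      ((A z).re + ((starRingEnd ℂ) (Complex.exp z) * B z).re) / (1 + Real.exp (2 * z.re)))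
        z Complex.I = 0) :
    ∀ z : ℂ, (deriv A z + (starRingEnd ℂ) (Complex.exp z) * (deriv B z - B z)).im = 0 := by
  intro z
  set h : ℂ → ℝ := fun z : ℂ =>
      ((A z).re + ((starRingEnd ℂ) (Complex.exp z) * B z).re) / (1 + Real.exp (2 * z.re)) with hh_def
  have hAr : Differentiable ℝ A := hA.restrictScalars ℝ
  have hBr : Differentiable ℝ B := hB.restrictScalars ℝ
  have hgr : Differentiable ℝ Complex.exp := (Complex.differentiable_exp (𝕜 := ℂ)).restrictScalars ℝ
  have hNd : Differentiable ℝ (fun z : ℂ => (A z).re + ((starRingEnd ℂ) (Complex.exp z) * B z).re) := by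
    apply Differentiable.add
    · exact fun x => (Complex.reCLM.differentiableAt.comp x (hAr x))
    · have hc : Differentiable ℝ (fun z : ℂ => (starRingEnd ℂ) (Complex.exp z)) := by
        simpa [Complex.star_def] using hgr.star
      exact fun x => (Complex.reCLM.differentiableAt.comp x ((hc.mul hBr) x))
  have hDd : Differentiable ℝ (fun z : ℂ => 1 + Real.exp (2 * z.re)) := by
    apply Differentiable.const_add
    exact Real.differentiable_exp.comp ((differentiable_const (2:ℝ)).mul Complex.reCLM.differentiable)
  have hhd : Differentiable ℝ h := by
    rw [hh_def]
    have := hNd.mul (hDd.inv (fun x => (Dpos x).ne'))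
    simpa [div_eq_mul_inv, Pi.mul_def, Pi.inv_def] using this
  have hlineI : HasDerivAt (fun t : ℝ => z + t • Complex.I) Complex.I 0 := by
    simpa using ((hasDerivAt_id (0:ℝ)).smul_const Complex.I).const_add z
  have h1 : HasDerivAt (fun t : ℝ => h (z + t • Complex.I)) 0 0 := by
    have := (hhd z).hasFDerivAt.comp_hasDerivAt_of_eq 0 hlineI (by simp)
    rwa [hyp z] at this
  have hdA : HasDerivAt (fun t : ℝ => (A (z + t • Complex.I)).re)
      (Complex.I * deriv A z).re 0 := hd_re (ld_hol hA z Complex.I)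
  have hdCB : HasDerivAt (fun t : ℝ => ((starRingEnd ℂ) (Complex.exp (z + t • Complex.I)) * B (z + t • Complex.I)).re)
      ((starRingEnd ℂ) (Complex.I * Complex.exp z) * B z
        + (starRingEnd ℂ) (Complex.exp z) * (Complex.I * deriv B z)).re 0 := by
    have := ((ld_conj (Complex.differentiable_exp (𝕜 := ℂ)) z Complex.I).mul (ld_hol hB z Complex.I))
    rw [Complex.deriv_exp] at this
    simpa using hd_re this
  have hre : ∀ t : ℝ, (z + t • Complex.I).re = z.re := by
    intro t; simp [Complex.add_re, Complex.smul_re]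
  have h2 : HasDerivAt (fun t : ℝ => h (z + t • Complex.I))
      (((Complex.I * deriv A z).re
        + ((starRingEnd ℂ) (Complex.I * Complex.exp z) * B z
          + (starRingEnd ℂ) (Complex.exp z) * (Complex.I * deriv B z)).re) / (1 + Real.exp (2 * z.re))) 0 := by
    have h4 := hdA.add hdCB
    have h3 := h4.div_const (1 + Real.exp (2 * z.re))
    have : (fun t : ℝ => ((A (z + t • Complex.I)).re
        + ((starRingEnd ℂ) (Complex.exp (z + t • Complex.I)) * B (z + t • Complex.I)).re)
          / (1 + Real.exp (2 * z.re))) = fun t : ℝ => h (z + t • Complex.I) := by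
      funext t; rw [hh_def]; simp only [hre t]
    simp only [Pi.add_apply] at h3; rwa [this] at h3
  have key := h2.unique h1
  rw [div_eq_zero_iff] at key
  have key2 := key.resolve_right (Dpos z).ne'
  simp only [Complex.add_im, Complex.mul_re, Complex.mul_im, Complex.sub_re, Complex.sub_im,
    Complex.add_re, Complex.conj_re, Complex.conj_im, Complex.I_re, Complex.I_im] at key2 ⊢
  ring_nf at key2 ⊢
  linarith [key2]

/-! ### Step 2: differentiate the identity -/

lemma step2 (A B : ℂ → ℂ) (hB : Differentiable ℂ B)
    (hA' : Differentiable ℂ (deriv A)) (hB' : Differentiable ℂ (deriv B))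
    (hW : ∀ z : ℂ, (deriv A z + (starRingEnd ℂ) (Complex.exp z) * (deriv B z - B z)).im = 0) :
    ∀ z : ℂ, deriv (deriv A) z + (starRingEnd ℂ) (Complex.exp z) * (deriv (deriv B) z - deriv B z)
      = (starRingEnd ℂ) ((starRingEnd ℂ) (Complex.exp z) * (deriv B z - B z)) := by
  intro z
  have gen : ∀ w : ℂ, (w * deriv (deriv A) z
      + ((starRingEnd ℂ) (w * Complex.exp z) * (deriv B z - B z)
        + (starRingEnd ℂ) (Complex.exp z) * (w * deriv (deriv B) z - w * deriv B z))).im = 0 := by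
    intro w
    have hd := (ld_hol hA' z w).add
      ((ld_conj (Complex.differentiable_exp (𝕜 := ℂ)) z w).mul
        ((ld_hol hB' z w).sub (ld_hol hB z w)))
    rw [Complex.deriv_exp] at hd
    have hd2 := hd_im hd
    have hz : ∀ t : ℝ, (deriv A (z + t • w)
        + (starRingEnd ℂ) (Complex.exp (z + t • w)) * (deriv B (z + t • w) - B (z + t • w))).im = 0 :=
      fun t => hW _
    have := zero_of_const (by simpa [mul_sub] using hd2) (by simpa [mul_sub] using hz)
    simpa [mul_sub] using this
  have e1 := gen 1
  have eI := gen Complex.I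
  apply Complex.ext <;>
  · simp only [one_mul, Complex.add_im, Complex.add_re, Complex.mul_re, Complex.mul_im,
      Complex.sub_re, Complex.sub_im, Complex.conj_re, Complex.conj_im, Complex.I_re,
      Complex.I_im] at e1 eI ⊢
    ring_nf at e1 eI ⊢
    linarith [e1, eI]

/-! ### Step 3: conclude that `A'' - A'` has vanishing imaginary part -/

lemma stepIm (A B : ℂ → ℂ) (c : ℝ) (hA : Differentiable ℂ A) (hB : Differentiable ℂ B)
    (hB'eq : ∀ z : ℂ, deriv B z = (deriv A z - A z + Complex.I * (c : ℂ)) * Complex.exp z)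
    (hPQ : ∀ z : ℂ, deriv (deriv A) z
        + (starRingEnd ℂ) (Complex.exp z) * (deriv (deriv B) z - deriv B z)
      = (starRingEnd ℂ) ((starRingEnd ℂ) (Complex.exp z) * (deriv B z - B z))) :
    ∀ z : ℂ, (deriv (deriv A) z - deriv A z).im = 0 := by
  have hA' := deriv_entire hA
  have hA'' := deriv_entire hA'
  have hexp := Complex.differentiable_exp (𝕜 := ℂ)
  have hp : Differentiable ℂ (fun z => deriv A z - A z + Complex.I * (c:ℂ)) :=
    (hA'.sub hA).add_const _
  have hpd : ∀ z : ℂ, deriv (fun z => deriv A z - A z + Complex.I * (c:ℂ)) z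
      = deriv (deriv A) z - deriv A z := by
    intro z; rw [deriv_add_const]; exact deriv_sub (hA' z) (hA z)
  have hX3 : ∀ z : ℂ, Complex.exp z * (starRingEnd ℂ) (deriv B z)
      = ((Real.exp (2*z.re) : ℝ) : ℂ) * (starRingEnd ℂ) (deriv A z - A z + Complex.I * (c:ℂ)) := by
    intro z
    rw [hB'eq z, map_mul]
    linear_combination (starRingEnd ℂ) (deriv A z - A z + Complex.I * (c:ℂ)) * hgg z
  have hB''s : ∀ z : ℂ, deriv (deriv B) z - deriv B z
      = (deriv (deriv A) z - deriv A z) * Complex.exp z := by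
    intro z
    have hfun : deriv B = fun z => (deriv A z - A z + Complex.I*(c:ℂ)) * Complex.exp z :=
      funext hB'eq
    rw [hfun, deriv_fun_mul (hp z) (hexp z), hpd z, Complex.deriv_exp, ← hfun, hB'eq z]
    ring
  have hG : ∀ z : ℂ, deriv (deriv A) z
      + ((Real.exp (2*z.re) : ℝ) : ℂ) * (deriv (deriv A) z - deriv A z)
      - ((Real.exp (2*z.re) : ℝ) : ℂ) * (starRingEnd ℂ) (deriv A z - A z + Complex.I * (c:ℂ))
      + Complex.exp z * (starRingEnd ℂ) (B z) = 0 := by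
    intro z
    have h := hPQ z
    rw [hB''s z, map_mul, Complex.conj_conj, map_sub] at h
    linear_combination h - (deriv (deriv A) z - deriv A z) * hgg z + hX3 z
  intro z
  have hdG : ∀ w : ℂ, (w * deriv (deriv (deriv A)) z
      + (((2 * w.re * Real.exp (2 * z.re) : ℝ) : ℂ) * (deriv (deriv A) z - deriv A z)
        + ((Real.exp (2*z.re) : ℝ) : ℂ) * (w * deriv (deriv (deriv A)) z - w * deriv (deriv A) z))
      - (((2 * w.re * Real.exp (2 * z.re) : ℝ) : ℂ)
            * (starRingEnd ℂ) (deriv A z - A z + Complex.I * (c:ℂ))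
        + ((Real.exp (2*z.re) : ℝ) : ℂ)
            * (starRingEnd ℂ) (w * (deriv (deriv A) z - deriv A z)))
      + (w * Complex.exp z * (starRingEnd ℂ) (B z)
        + Complex.exp z * (starRingEnd ℂ) (w * deriv B z))) = 0 := by
    intro w
    have T1 := ld_hol hA'' z w
    have T2 := (ld_E z w).mul ((ld_hol hA'' z w).sub (ld_hol hA' z w))
    have T3 := (ld_E z w).mul (ld_conj hp z w)
    have T4 := (ld_hol hexp z w).mul (ld_conj hB z w)
    have hd := ((T1.add T2).sub T3).add T4
    rw [Complex.deriv_exp, hpd] at hd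
    simp only [zero_smul, add_zero, Pi.sub_apply] at hd
    exact zero_of_constC hd (fun t => hG _)
  have d1 := hdG 1
  have dI := hdG Complex.I
  simp only [one_mul, Complex.one_re, Complex.I_re, map_mul, Complex.conj_I, mul_one,
    mul_zero, zero_mul, zero_add, add_zero, Complex.ofReal_mul, Complex.ofReal_ofNat,
    Complex.ofReal_zero] at d1 dI
  have key : (2 : ℂ) * ((Real.exp (2*z.re) : ℝ) : ℂ)
      * ((deriv (deriv A) z - deriv A z)
          - (starRingEnd ℂ) (deriv (deriv A) z - deriv A z)) = 0 := by
    linear_combination d1 + Complex.I * dI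
      - (deriv (deriv (deriv A)) z
          + ((Real.exp (2*z.re) : ℝ) : ℂ) * (deriv (deriv (deriv A)) z - deriv (deriv A) z)
          + ((Real.exp (2*z.re) : ℝ) : ℂ) * (starRingEnd ℂ) (deriv (deriv A) z - deriv A z)
          + Complex.exp z * (starRingEnd ℂ) (B z)
          - Complex.exp z * (starRingEnd ℂ) (deriv B z)) * Complex.I_sq
      - 2 * hX3 z
  have hEne : ((Real.exp (2*z.re) : ℝ) : ℂ) ≠ 0 := by
    simp [Real.exp_ne_zero]
  have hXz : (deriv (deriv A) z - deriv A z)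
      - (starRingEnd ℂ) (deriv (deriv A) z - deriv A z) = 0 := by
    have h2 : ((2 : ℂ) * ((Real.exp (2*z.re) : ℝ) : ℂ)) ≠ 0 := by
      simp [Real.exp_ne_zero]
    have := mul_eq_zero.mp (by linear_combination key :
      ((2 : ℂ) * ((Real.exp (2*z.re) : ℝ) : ℂ)) * ((deriv (deriv A) z - deriv A z)
        - (starRingEnd ℂ) (deriv (deriv A) z - deriv A z)) = 0)
    exact this.resolve_left h2
  have := sub_eq_zero.mp hXz
  have h3 : (starRingEnd ℂ) (deriv (deriv A) z - deriv A z) = deriv (deriv A) z - deriv A z :=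
    this.symm
  exact (Complex.conj_eq_iff_im.mp h3)

/-! ### Entire functions with real values are constant -/

lemma holo_real_const {f : ℂ → ℂ} (hf : Differentiable ℂ f) (h0 : ∀ z, (f z).im = 0) :
    ∀ z, f z = f 0 := by
  have hd : ∀ z, deriv f z = 0 := by
    intro z
    have e1 : ((1:ℂ) * deriv f z).im = 0 :=
      zero_of_const (hd_im (ld_hol hf z 1)) (fun t => h0 _)
    have eI : (Complex.I * deriv f z).im = 0 :=
      zero_of_const (hd_im (ld_hol hf z Complex.I)) (fun t => h0 _)
    apply Complex.ext <;>
      simp only [one_mul, Complex.mul_im, Complex.I_re, Complex.I_im, Complex.zero_re,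
        Complex.zero_im] at e1 eI ⊢ <;> linarith
  exact fun z => is_const_of_deriv_eq_zero hf hd z 0

/-! ### Main theorem -/

/-- classification step in Proposition 4.1. If B' = (A' − A + ic)e^z and
h = (Re A + ⟨e^z, B⟩)/(1+e^{2u}) is independent of v, then
h = a₁ − (a₂ + a₁(u−1)) tanh u for some real a₁, a₂. -/
theorem stmt_10 (A B : ℂ → ℂ) (c : ℝ)
    (hA : Differentiable ℂ A) (hB : Differentiable ℂ B)
    (hB' : ∀ z : ℂ, deriv B z = (deriv A z - A z + Complex.I * (c : ℂ)) * Complex.exp z) :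
    let h : ℂ → ℝ := fun z =>
      ((A z).re + ((starRingEnd ℂ) (Complex.exp z) * B z).re) / (1 + Real.exp (2 * z.re))
    (∀ z : ℂ, pd2 h z = 0) →
      ∃ a₁ a₂ : ℝ, ∀ z : ℂ, h z = a₁ - (a₂ + a₁ * (z.re - 1)) * Real.tanh z.re := by
  intro h hyp
  have hA' := deriv_entire hA
  have hA'' := deriv_entire hA'
  have hBd' := deriv_entire hB
  have hyp' : ∀ z : ℂ, fderiv ℝ (fun z : ℂ =>
      ((A z).re + ((starRingEnd ℂ) (Complex.exp z) * B z).re) / (1 + Real.exp (2 * z.re)))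
        z Complex.I = 0 := fun z => hyp z
  have hW := step1 A B hA hB hyp'
  have hPQ := step2 A B hB hA' hBd' hW
  have hIm := stepIm A B c hA hB hB' hPQ
  -- A'' - A' is a real constant kC
  obtain ⟨kC, hkCim, hfconst⟩ : ∃ kc : ℂ, kc.im = 0 ∧ ∀ z, deriv (deriv A) z - deriv A z = kc :=
    ⟨deriv (deriv A) 0 - deriv A 0, hIm 0, fun z => by
      simpa using holo_real_const (f := fun z => deriv (deriv A) z - deriv A z)
        (hA''.sub hA') hIm z⟩
  set k : ℝ := kC.re with hk_def
  have hkC : kC = (k : ℝ) := Complex.ext (by simp [hk_def]) (by simp [hkCim])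
  -- A' - A = kC z + m
  obtain ⟨m, hAff⟩ : ∃ m : ℂ, ∀ z : ℂ, deriv A z - A z = kC * z + m := by
    refine ⟨deriv A 0 - A 0, ?_⟩
    have hdz : ∀ z : ℂ, deriv (fun z => deriv A z - A z - kC * z) z = 0 := by
      intro z
      have hder : HasDerivAt (fun z : ℂ => deriv A z - A z - kC * z)
          ((deriv (deriv A) z - deriv A z) - kC * 1) z :=
        ((hA' z).hasDerivAt.sub (hA z).hasDerivAt).sub ((hasDerivAt_id z).const_mul kC)
      rw [hfconst z] at hder
      simpa using hder.deriv
    have hdiff : Differentiable ℂ (fun z : ℂ => deriv A z - A z - kC * z) :=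
      (hA'.sub hA).sub (differentiable_id.const_mul kC)
    intro z
    have := is_const_of_deriv_eq_zero hdiff hdz z 0
    simp only [mul_zero, sub_zero] at this
    linear_combination this
  -- the explicit form of B
  obtain ⟨b₀, hBform⟩ : ∃ b₀ : ℂ, ∀ z : ℂ,
      B z = (kC * z + m + Complex.I * c - kC) * Complex.exp z + b₀ := by
    refine ⟨B 0 - (m + Complex.I * c - kC), ?_⟩
    have hdz : ∀ z : ℂ, deriv (fun z => B z - (kC * z + m + Complex.I * c - kC) * Complex.exp z) z = 0 := by
      intro z
      have h1 : HasDerivAt (fun z : ℂ => (kC * z + m + Complex.I * c - kC) * Complex.exp z)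
          (kC * 1 * Complex.exp z + (kC * z + m + Complex.I * c - kC) * Complex.exp z) z := by
        exact ((((hasDerivAt_id z).const_mul kC).add_const m).add_const
          (Complex.I * c) |>.sub_const kC).mul (Complex.hasDerivAt_exp z)
      have h2 : HasDerivAt (fun z : ℂ => B z - (kC * z + m + Complex.I * c - kC) * Complex.exp z)
          (deriv B z - (kC * 1 * Complex.exp z + (kC * z + m + Complex.I * c - kC) * Complex.exp z)) z :=
        (hB z).hasDerivAt.sub h1
      rw [hB' z, hAff z] at h2
      have h3 : (kC * z + m + Complex.I * ↑c) * Complex.exp z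
          - (kC * 1 * Complex.exp z + (kC * z + m + Complex.I * ↑c - kC) * Complex.exp z) = 0 := by
        ring
      rw [h3] at h2
      exact h2.deriv
    have hdiff : Differentiable ℂ (fun z : ℂ => B z - (kC * z + m + Complex.I * c - kC) * Complex.exp z) := by
      apply hB.sub
      exact ((((differentiable_id.const_mul kC).add_const m).add_const
        (Complex.I * c)).sub_const kC).mul (Complex.differentiable_exp (𝕜 := ℂ))
    intro z
    have := is_const_of_deriv_eq_zero hdiff hdz z 0
    simp only [mul_zero, zero_add, Complex.exp_zero, mul_one] at this
    linear_combination this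
  -- the explicit form of A
  obtain ⟨a, hAform⟩ : ∃ a : ℂ, ∀ z : ℂ, A z = a * Complex.exp z - kC * z - m - kC := by
    refine ⟨A 0 + m + kC, ?_⟩
    have hexpneg : ∀ z : ℂ, HasDerivAt (fun z : ℂ => Complex.exp (-z)) (-Complex.exp (-z)) z := by
      intro z
      have := (Complex.hasDerivAt_exp (-z)).scomp z (hasDerivAt_neg z)
      simpa [Function.comp_def] using this
    have hdz : ∀ z : ℂ, deriv (fun z => (A z + kC * z + m + kC) * Complex.exp (-z)) z = 0 := by
      intro z
      have h1 : HasDerivAt (fun z : ℂ => A z + kC * z + m + kC)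
          (deriv A z + kC * 1) z :=
        (((hA z).hasDerivAt.add ((hasDerivAt_id z).const_mul kC)).add_const m).add_const kC
      have h2 := h1.mul (hexpneg z)
      have h3 : (deriv A z + kC * 1) * Complex.exp (-z)
          + (A z + kC * z + m + kC) * -Complex.exp (-z)
          = ((deriv A z - A z) - kC * z - m) * Complex.exp (-z) := by ring
      rw [h3, hAff z] at h2
      have h4 : (kC * z + m - kC * z - m) * Complex.exp (-z) = 0 := by ring
      rw [h4] at h2
      exact h2.deriv
    have hdiff : Differentiable ℂ (fun z : ℂ => (A z + kC * z + m + kC) * Complex.exp (-z)) := by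
      apply Differentiable.mul
      · exact ((hA.add (differentiable_id.const_mul kC)).add_const m).add_const kC
      · exact (Complex.differentiable_exp (𝕜 := ℂ)).comp differentiable_neg
    intro z
    have hcz := is_const_of_deriv_eq_zero hdiff hdz z 0
    simp only [mul_zero, add_zero, neg_zero, Complex.exp_zero, mul_one] at hcz
    have hmul := congrArg (fun w => w * Complex.exp z) hcz
    simp only [mul_assoc, ← Complex.exp_add, neg_add_cancel, Complex.exp_zero, mul_one] at hmul
    linear_combination hmul
  -- the value of b₀
  have hA'form : ∀ z : ℂ, deriv A z = a * Complex.exp z - kC := by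
    intro z
    have := hAff z
    rw [hAform z] at this
    linear_combination this
  have hb0 : b₀ = -(starRingEnd ℂ) a := by
    have hWgen : ∀ z : ℂ, ((a * Complex.exp z - kC) + (starRingEnd ℂ) (Complex.exp z)
        * ((kC * Complex.exp z - b₀))).im = 0 := by
      intro z
      have := hW z
      rw [hA'form z, hB' z, hAff z, hBform z] at this
      have heq : (kC * z + m + Complex.I * ↑c) * Complex.exp z
          - ((kC * z + m + Complex.I * ↑c - kC) * Complex.exp z + b₀)
          = kC * Complex.exp z - b₀ := by ring
      rw [heq] at this
      exact this
    have e0 := hWgen 0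
    have e1 := hWgen ((Real.pi / 2 : ℝ) * Complex.I)
    have hexp1 : Complex.exp ((Real.pi / 2 : ℝ) * Complex.I) = Complex.I := by
      rw [Complex.exp_mul_I, ← Complex.ofReal_cos, ← Complex.ofReal_sin,
        Real.cos_pi_div_two, Real.sin_pi_div_two]
      simp
    rw [hexp1] at e1
    rw [hkC] at e0 e1
    simp only [Complex.exp_zero, map_one, one_mul, mul_one, Complex.add_im, Complex.sub_im,
      Complex.mul_im, Complex.mul_re, Complex.add_re, Complex.sub_re, Complex.conj_re,
      Complex.conj_im, Complex.I_re, Complex.I_im, Complex.one_re, Complex.one_im,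
      Complex.ofReal_re, Complex.ofReal_im] at e0 e1
    apply Complex.ext
    · simp only [Complex.neg_re, Complex.conj_re]
      linarith [e0, e1]
    · simp only [Complex.neg_im, Complex.conj_im]
      linarith [e0, e1]
  -- the numerator in closed form
  have hN : ∀ z : ℂ, (A z).re + ((starRingEnd ℂ) (Complex.exp z) * B z).re
      = (-k * z.re - m.re - k) + Real.exp (2 * z.re) * (k * z.re + m.re - k) := by
    intro z
    have hsplit : (starRingEnd ℂ) (Complex.exp z) * B z
        = (kC * z + m + Complex.I * c - kC) * ((Real.exp (2 * z.re) : ℝ) : ℂ)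
          + (starRingEnd ℂ) (Complex.exp z) * b₀ := by
      rw [hBform z]
      linear_combination (kC * z + m + Complex.I * c - kC) * hgg z
    rw [hAform z, hsplit, hb0, hkC]
    simp only [Complex.add_re, Complex.sub_re, Complex.mul_re, Complex.mul_im, Complex.add_im,
      Complex.sub_im, Complex.ofReal_re, Complex.ofReal_im, Complex.I_re, Complex.I_im,
      Complex.conj_re, Complex.conj_im, Complex.neg_re, Complex.neg_im]
    ring
  -- conclusion
  refine ⟨-k, -m.re - k, fun z => ?_⟩
  show ((A z).re + ((starRingEnd ℂ) (Complex.exp z) * B z).re) / (1 + Real.exp (2 * z.re)) = _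
  rw [hN z]
  have ht : Real.tanh z.re = (Real.exp (2*z.re) - 1)/(Real.exp (2*z.re) + 1) := by
    rw [Real.tanh_eq_sinh_div_cosh, Real.sinh_eq, Real.cosh_eq]
    have h3 : Real.exp (2 * z.re) = Real.exp z.re * Real.exp z.re := by
      rw [← Real.exp_add]; ring_nf
    have h4 : Real.exp z.re * Real.exp (-z.re) = 1 := by rw [← Real.exp_add]; simp
    have hx := Real.exp_pos z.re
    have hy := Real.exp_pos (-z.re)
    rw [h3]
    field_simp
    linear_combination (-2 * Real.exp z.re) * h4
  rw [ht]
  have h2 : (0:ℝ) < 1 + Real.exp (2 * z.re) := Dpos z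
  have h2' : Real.exp (2*z.re) + 1 ≠ 0 := by positivity
  field_simp
  ring
end
end

section
/- Let A, B : ℂ → ℂ be entire functions and define h : ℂ → ℝ by h(u+iv) = ( Re A(z) + Re( \overline{e^z} · B(z) ) ) / ( 1 + e^{2u} ). If h is independent of v, i.e. ∂h/∂v ≡ 0, then there exist real constants a₂, a₃, c₁, c₂ such that h(u+iv) = ( a₂ + c₁ u + e^{2u}( a₃ + c₂ u ) ) / ( 1 + e^{2u} ) for all u, v. -/
open Complex

noncomputable section

/-- An entire function vanishing on the real axis vanishes everywhere. -/
lemma zero_of_zero_on_real (f : ℂ → ℂ) (hf : Differentiable ℂ f)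
    (h0 : ∀ x : ℝ, f x = 0) (z : ℂ) : f z = 0 := by
  have han : AnalyticOnNhd ℂ f Set.univ := analyticOnNhd_univ_iff_differentiable.2 hf
  have ht : Filter.Tendsto (fun x : ℝ => (x : ℂ)) (nhdsWithin 0 {(0:ℝ)}ᶜ)
      (nhdsWithin 0 {(0:ℂ)}ᶜ) := by
    apply tendsto_nhdsWithin_of_tendsto_nhds_of_eventually_within
    · exact ((Complex.continuous_ofReal.tendsto 0).mono_left nhdsWithin_le_nhds).congr
        (fun x => rfl) |>.congr' (by simp) |>.mono_right (by simp [Complex.ofReal_zero])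
    · filter_upwards [self_mem_nhdsWithin] with x hx
      simpa using hx
  have hfreq : ∃ᶠ w in nhdsWithin (0:ℂ) {(0:ℂ)}ᶜ, f w = 0 :=
    ht.frequently (Filter.Frequently.of_forall fun x => h0 x)
  exact han.eqOn_zero_of_preconnected_of_frequently_eq_zero isPreconnected_univ
    (Set.mem_univ 0) hfreq (Set.mem_univ z)

/-- conj ∘ f ∘ conj is complex differentiable, with derivative conj (f' (conj z)). -/
lemma hasDerivAt_conj_comp {f : ℂ → ℂ} {f' : ℂ} (z : ℂ)
    (hf : HasDerivAt f f' ((starRingEnd ℂ) z)) :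
    HasDerivAt (fun w => (starRingEnd ℂ) (f ((starRingEnd ℂ) w))) ((starRingEnd ℂ) f') z := by
  have hc : HasFDerivAt (fun w : ℂ => (starRingEnd ℂ) w)
      (Complex.conjCLE.toContinuousLinearMap) z := Complex.conjCLE.hasFDerivAt
  have hc2 : HasFDerivAt (fun w : ℂ => (starRingEnd ℂ) w)
      (Complex.conjCLE.toContinuousLinearMap) (f ((starRingEnd ℂ) z)) :=
    Complex.conjCLE.hasFDerivAt
  have hf2 : HasFDerivAt f ((ContinuousLinearMap.smulRight (1 : ℂ →L[ℂ] ℂ) f').restrictScalars ℝ)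
      ((starRingEnd ℂ) z) := (hf.hasFDerivAt).restrictScalars ℝ
  have step : HasFDerivAt (fun w => (starRingEnd ℂ) (f ((starRingEnd ℂ) w)))
      (Complex.conjCLE.toContinuousLinearMap ∘L
        (((ContinuousLinearMap.smulRight (1 : ℂ →L[ℂ] ℂ) f').restrictScalars ℝ) ∘L
          Complex.conjCLE.toContinuousLinearMap)) z := hc2.comp z (hf2.comp z hc)
  have heq : (Complex.conjCLE.toContinuousLinearMap ∘L
        (((ContinuousLinearMap.smulRight (1 : ℂ →L[ℂ] ℂ) f').restrictScalars ℝ) ∘L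
          Complex.conjCLE.toContinuousLinearMap))
      = (ContinuousLinearMap.smulRight (1 : ℂ →L[ℂ] ℂ) ((starRingEnd ℂ) f')).restrictScalars ℝ := by
    apply ContinuousLinearMap.ext
    intro w
    simp [mul_comm]
  rw [heq] at step
  have : HasFDerivAt (fun w => (starRingEnd ℂ) (f ((starRingEnd ℂ) w)))
      (ContinuousLinearMap.smulRight (1 : ℂ →L[ℂ] ℂ) ((starRingEnd ℂ) f')) z := by
    rw [hasFDerivAt_iff_isLittleO_nhds_zero] at step ⊢
    simpa using step
  simpa using this.hasDerivAt

/-- Entire function with zero derivative is constant. -/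
lemma entire_const {f : ℂ → ℂ} (hf : Differentiable ℂ f) (hd : ∀ z, deriv f z = 0) (z : ℂ) :
    f z = f 0 := is_const_of_deriv_eq_zero hf hd z 0

/-- classification step in Theorem 5.1. If
h = (Re A + ⟨e^z, B⟩)/(1+e^{2u}) is independent of v, then
h = (a₂ + c₁u + e^{2u}(a₃ + c₂u))/(1+e^{2u}) for some real a₂, a₃, c₁, c₂. -/
theorem stmt_11 (A B : ℂ → ℂ)
    (hA : Differentiable ℂ A) (hB : Differentiable ℂ B) :
    let h : ℂ → ℝ := fun z =>
      ((A z).re + ((starRingEnd ℂ) (Complex.exp z) * B z).re) / (1 + Real.exp (2 * z.re))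
    (∀ z : ℂ, pd2 h z = 0) →
      ∃ a₂ a₃ c₁ c₂ : ℝ, ∀ z : ℂ,
        h z = (a₂ + c₁ * z.re + Real.exp (2 * z.re) * (a₃ + c₂ * z.re))
                / (1 + Real.exp (2 * z.re)) := by
  intro h hv
  set P : ℂ → ℂ := deriv A with hPdef
  set G : ℂ → ℂ := fun z => deriv B z - B z with hGdef
  set Q : ℂ → ℂ := fun z => Complex.exp (-z) * G z with hQdef
  set F : ℂ → ℝ := fun z => (A z).re + ((starRingEnd ℂ) (Complex.exp z) * B z).re with hFdef
  set d : ℂ → ℝ := fun z => 1 + Real.exp (2 * z.re) with hddef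
  -- basic facts
  have hexp_ne : ∀ z : ℂ, Complex.exp z ≠ 0 := fun z => Complex.exp_ne_zero z
  have hdpos : ∀ z : ℂ, 0 < d z := fun z => by positivity
  have hdne : ∀ z : ℂ, d z ≠ 0 := fun z => ne_of_gt (hdpos z)
  have hdiffB' : Differentiable ℂ (deriv B) :=
    analyticOnNhd_univ_iff_differentiable.1 ((analyticOnNhd_univ_iff_differentiable.2 hB).deriv)
  have hP_diff : Differentiable ℂ P :=
    analyticOnNhd_univ_iff_differentiable.1 ((analyticOnNhd_univ_iff_differentiable.2 hA).deriv)
  have hG_diff : Differentiable ℂ G := hdiffB'.sub hB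
  have hQ_diff : Differentiable ℂ Q :=
    (Complex.differentiable_exp.comp differentiable_neg).mul hG_diff
  -- real differentiability
  have hdiffd : Differentiable ℝ d := by
    apply Differentiable.const_add
    exact Real.differentiable_exp.comp ((differentiable_const (2:ℝ)).mul Complex.reCLM.differentiable)
  have hdiffF : Differentiable ℝ F := by
    apply Differentiable.add
    · exact Complex.reCLM.differentiable.comp (hA.restrictScalars ℝ)
    · have hstar : Differentiable ℝ (fun z : ℂ => (starRingEnd ℂ) (Complex.exp z)) := by
        have hce2 : Differentiable ℂ Complex.exp := Complex.differentiable_exp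
        have hre : Differentiable ℝ (Complex.exp) := hce2.restrictScalars ℝ
        have := Complex.conjCLE.toContinuousLinearMap.differentiable.comp hre
        exact this
      have hm := hstar.mul (hB.restrictScalars ℝ)
      exact fun z => Complex.reCLM.differentiableAt.comp z (hm z)
  have hdiffh : Differentiable ℝ h := by
    have := hdiffF.mul (hdiffd.inv hdne)
    have e : h = F * d⁻¹ := by funext z; simp [h, F, d, div_eq_mul_inv]
    rw [e]; exact this
  -- pd2 of the denominator vanishes
  have hd2 : ∀ z : ℂ, fderiv ℝ d z Complex.I = 0 := by
    intro z
    have h1 : HasFDerivAt (fun z : ℂ => 2 * z.re) ((2:ℝ) • Complex.reCLM) z :=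
      Complex.reCLM.hasFDerivAt.const_mul 2
    have h2 : HasFDerivAt (fun z : ℂ => Real.exp (2 * z.re))
        (Real.exp (2 * z.re) • ((2:ℝ) • Complex.reCLM)) z :=
      by have := (Real.hasDerivAt_exp (2 * z.re)).comp_hasFDerivAt z h1; exact this
    have h3 : HasFDerivAt d (Real.exp (2 * z.re) • ((2:ℝ) • Complex.reCLM)) z := h2.const_add 1
    rw [h3.fderiv]
    simp [Complex.I_re]
  -- pd2 of the numerator vanishes
  have key1 : ∀ z : ℂ, fderiv ℝ F z Complex.I = 0 := by
    intro z
    have hFh : F = fun z => h z * d z := by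
      funext w
      simp only [h, hFdef, hddef]
      field_simp
    have := fderiv_mul (𝕜 := ℝ) (hdiffh z) (hdiffd z)
    have h4 : fderiv ℝ F z = h z • fderiv ℝ d z + d z • fderiv ℝ h z := by
      rw [hFh]; exact this
    have hv' : fderiv ℝ h z Complex.I = 0 := hv z
    rw [h4]
    simp [hd2 z, hv']
  -- explicit formula for pd2 F
  have key2 : ∀ z : ℂ, (P z).im + (Complex.exp ((starRingEnd ℂ) z) * G z).im = 0 := by
    intro z
    have hA' : HasDerivAt A (P z) z := (hA z).hasDerivAt
    have hB' : HasDerivAt B (deriv B z) z := (hB z).hasDerivAt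
    have T1 : HasFDerivAt (fun z => (A z).re)
        (Complex.reCLM.comp ((ContinuousLinearMap.smulRight (1 : ℂ →L[ℂ] ℂ) (P z)).restrictScalars ℝ)) z :=
      Complex.reCLM.hasFDerivAt.comp z (hA'.hasFDerivAt.restrictScalars ℝ)
    have hce : HasFDerivAt (fun z : ℂ => (starRingEnd ℂ) (Complex.exp z))
        (Complex.conjCLE.toContinuousLinearMap ∘L
          ((ContinuousLinearMap.smulRight (1 : ℂ →L[ℂ] ℂ) (Complex.exp z)).restrictScalars ℝ)) z := by
      have := Complex.conjCLE.hasFDerivAt.comp z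
        ((Complex.hasDerivAt_exp z).hasFDerivAt.restrictScalars ℝ)
      exact this
    have hBr : HasFDerivAt B
        ((ContinuousLinearMap.smulRight (1 : ℂ →L[ℂ] ℂ) (deriv B z)).restrictScalars ℝ) z :=
      hB'.hasFDerivAt.restrictScalars ℝ
    have T2 := hce.mul' hBr
    have T3 : HasFDerivAt (fun y : ℂ => ((starRingEnd ℂ) (Complex.exp y) * B y).re) _ z :=
      Complex.reCLM.hasFDerivAt.comp z T2
    have TF : HasFDerivAt F _ z := T1.add T3
    have hval : fderiv ℝ F z Complex.I = 0 := key1 z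
    rw [TF.fderiv] at hval
    simp only [ContinuousLinearMap.add_apply, ContinuousLinearMap.coe_comp', Function.comp_apply,
      ContinuousLinearMap.coe_restrictScalars', ContinuousLinearMap.smulRight_apply,
      ContinuousLinearMap.one_apply, ContinuousLinearMap.smul_apply,
      ContinuousLinearEquiv.coe_coe, Complex.conjCLE_apply, Complex.reCLM_apply] at hval
    -- hval : 0 = (I • P z).re + (conj(exp z) • (I • deriv B z) + conj (I • exp z) • B z).re
    have hconj : (starRingEnd ℂ) (Complex.exp z) = Complex.exp ((starRingEnd ℂ) z) :=
      (Complex.exp_conj z).symm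
    have expand : (Complex.I * P z).re +
        (Complex.exp ((starRingEnd ℂ) z) * (Complex.I * deriv B z) +
          (-Complex.I * Complex.exp ((starRingEnd ℂ) z)) * B z).re
        = -((P z).im + (Complex.exp ((starRingEnd ℂ) z) * G z).im) := by
      simp only [hGdef]
      simp only [Complex.add_re, Complex.mul_re, Complex.mul_im, Complex.sub_re,
        Complex.sub_im, Complex.I_re, Complex.I_im, Complex.add_im, Complex.neg_re,
        Complex.neg_im, Complex.mul_re, neg_neg]
      try ring
    have hconjI : (starRingEnd ℂ) (Complex.I * Complex.exp z)
        = -Complex.I * Complex.exp ((starRingEnd ℂ) z) := by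
      rw [map_mul, Complex.conj_I, hconj]; try ring
    simp only [smul_eq_mul, op_smul_eq_mul] at hval
    rw [hconjI, hconj] at hval
    rw [expand] at hval
    linarith [hval]
  -- e^{z + conj z} = e^{2u}
  have expsum : ∀ z : ℂ, Complex.exp (z + (starRingEnd ℂ) z) = (Real.exp (2 * z.re) : ℂ) := by
    intro z
    rw [Complex.add_conj, ← Complex.ofReal_exp]
  -- reformulated independence condition
  have key2' : ∀ z : ℂ, (P z).im + Real.exp (2 * z.re) * (Q z).im = 0 := by
    intro z
    have h1 := key2 z
    have h2 : Complex.exp ((starRingEnd ℂ) z) * G z = (Real.exp (2 * z.re) : ℂ) * Q z := by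
      simp only [hQdef]
      rw [← expsum z, ← mul_assoc, ← Complex.exp_add,
        show z + (starRingEnd ℂ) z + -z = (starRingEnd ℂ) z from by ring]
    rw [h2] at h1
    rw [Complex.im_ofReal_mul] at h1
    exact h1
  -- holomorphic reflections
  set Pc : ℂ → ℂ := fun w => (starRingEnd ℂ) (P ((starRingEnd ℂ) w)) with hPcdef
  set Qc : ℂ → ℂ := fun w => (starRingEnd ℂ) (Q ((starRingEnd ℂ) w)) with hQcdef
  have hPc_diff : Differentiable ℂ Pc :=
    fun z => (hasDerivAt_conj_comp z ((hP_diff _).hasDerivAt)).differentiableAt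
  have hQc_diff : Differentiable ℂ Qc :=
    fun z => (hasDerivAt_conj_comp z ((hQ_diff _).hasDerivAt)).differentiableAt
  have hPc_conj : ∀ z : ℂ, Pc ((starRingEnd ℂ) z) = (starRingEnd ℂ) (P z) := by
    intro z; simp only [hPcdef]; rw [Complex.conj_conj]
  have hQc_conj : ∀ z : ℂ, Qc ((starRingEnd ℂ) z) = (starRingEnd ℂ) (Q z) := by
    intro z; simp only [hQcdef]; rw [Complex.conj_conj]
  -- the polarized identity on the diagonal
  have key3 : ∀ z : ℂ, P z - Pc ((starRingEnd ℂ) z)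
      + Complex.exp (z + (starRingEnd ℂ) z) * (Q z - Qc ((starRingEnd ℂ) z)) = 0 := by
    intro z
    rw [hPc_conj, hQc_conj, expsum]
    have h0 : ((P z).im : ℂ) + (Real.exp (2 * z.re) : ℂ) * ((Q z).im : ℂ) = 0 := by
      exact_mod_cast congrArg (fun r : ℝ => (r : ℂ)) (key2' z)
    have h1 : P z - (starRingEnd ℂ) (P z) = 2 * ((P z).im : ℂ) * Complex.I := by
      rw [Complex.sub_conj]; push_cast; ring
    have h2 : Q z - (starRingEnd ℂ) (Q z) = 2 * ((Q z).im : ℂ) * Complex.I := by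
      rw [Complex.sub_conj]; push_cast; ring
    rw [h1, h2]
    linear_combination (2 * Complex.I) * h0
  -- identity theorem: the identity polarizes
  have keyK : ∀ a b : ℂ, P a - Pc b + Complex.exp (a + b) * (Q a - Qc b) = 0 := by
    have stepA : ∀ (t : ℝ) (z : ℂ), P (z + (t : ℂ) * Complex.I) - Pc (z - (t : ℂ) * Complex.I)
        + Complex.exp ((z + (t : ℂ) * Complex.I) + (z - (t : ℂ) * Complex.I))
          * (Q (z + (t : ℂ) * Complex.I) - Qc (z - (t : ℂ) * Complex.I)) = 0 := by
      intro t
      apply zero_of_zero_on_real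
      · have d1 : Differentiable ℂ (fun z : ℂ => z + (t : ℂ) * Complex.I) :=
          differentiable_id.add_const _
        have d2 : Differentiable ℂ (fun z : ℂ => z - (t : ℂ) * Complex.I) :=
          differentiable_id.sub_const _
        exact ((hP_diff.comp d1).sub (hPc_diff.comp d2)).add
          ((Complex.differentiable_exp.comp (d1.add d2)).mul
            ((hQ_diff.comp d1).sub (hQc_diff.comp d2)))
      · intro x
        have hx : (starRingEnd ℂ) ((x : ℂ) + (t : ℂ) * Complex.I)
            = (x : ℂ) - (t : ℂ) * Complex.I := by
          rw [map_add, map_mul, Complex.conj_I, Complex.conj_ofReal, Complex.conj_ofReal]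
          ring
        have h3 := key3 ((x : ℂ) + (t : ℂ) * Complex.I)
        rw [hx] at h3
        exact h3
    have stepB : ∀ (w : ℂ) (t : ℂ), P (w + t * Complex.I) - Pc (w - t * Complex.I)
        + Complex.exp ((w + t * Complex.I) + (w - t * Complex.I))
          * (Q (w + t * Complex.I) - Qc (w - t * Complex.I)) = 0 := by
      intro w
      apply zero_of_zero_on_real
      · have d1 : Differentiable ℂ (fun t : ℂ => w + t * Complex.I) :=
          (differentiable_id.mul_const _).const_add _
        have d2 : Differentiable ℂ (fun t : ℂ => w - t * Complex.I) :=
          (differentiable_const w).sub (differentiable_id.mul_const _)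
        exact ((hP_diff.comp d1).sub (hPc_diff.comp d2)).add
          ((Complex.differentiable_exp.comp (d1.add d2)).mul
            ((hQ_diff.comp d1).sub (hQc_diff.comp d2)))
      · intro x
        exact stepA x w
    intro a b
    have hI := Complex.I_mul_I
    have ha : (a + b) / 2 + ((b - a) * Complex.I / 2) * Complex.I = a := by
      linear_combination ((b - a) / 2) * hI
    have hb : (a + b) / 2 - ((b - a) * Complex.I / 2) * Complex.I = b := by
      linear_combination (-(b - a) / 2) * hI
    have := stepB ((a + b) / 2) ((b - a) * Complex.I / 2)
    rw [ha, hb] at this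
    exact this
  -- extract the explicit forms of P and Q
  have hexppi : ∀ z : ℂ, Complex.exp (z + (Real.pi : ℂ) * Complex.I) = -Complex.exp z := by
    intro z; rw [Complex.exp_add, Complex.exp_pi_mul_I]; ring
  set α : ℂ := (Pc 0 + Pc ((Real.pi : ℂ) * Complex.I)) / 2 with hαdef
  set β : ℂ := (Qc 0 - Qc ((Real.pi : ℂ) * Complex.I)) / 2 with hβdef
  set γ : ℂ := (Qc 0 + Qc ((Real.pi : ℂ) * Complex.I)) / 2 with hγdef
  set δ : ℂ := (Pc 0 - Pc ((Real.pi : ℂ) * Complex.I)) / 2 with hδdef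
  have hPform : ∀ z : ℂ, P z = α + β * Complex.exp z := by
    intro z
    have h1 := keyK z 0
    rw [add_zero] at h1
    have h2 := keyK z ((Real.pi : ℂ) * Complex.I)
    rw [hexppi z] at h2
    rw [hαdef, hβdef]
    linear_combination (h1 + h2) / 2
  have hQform : ∀ z : ℂ, Q z = γ + δ * Complex.exp (-z) := by
    intro z
    have h1 := keyK z 0
    rw [add_zero] at h1
    have h2 := keyK z ((Real.pi : ℂ) * Complex.I)
    rw [hexppi z] at h2
    have hinv : Complex.exp (-z) * Complex.exp z = 1 := by
      rw [← Complex.exp_add]; simp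
    rw [hγdef, hδdef]
    linear_combination (Complex.exp (-z) / 2) * (h1 - h2)
      - (Q z - (Qc 0 + Qc ((Real.pi : ℂ) * Complex.I)) / 2) * hinv
  -- constraints on the constants
  have hconstraint : ∀ z : ℂ, (α + β * Complex.exp z).im
      + Real.exp (2 * z.re) * (γ + δ * Complex.exp (-z)).im = 0 := by
    intro z
    have := key2' z
    rw [hPform z, hQform z] at this
    exact this
  have hval1 : ∀ x : ℝ, 0 < x →
      α.im + β.im * x + (x * x) * γ.im + x * δ.im = 0 := by
    intro x hx
    have hxne : x ≠ 0 := ne_of_gt hx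
    have hz := hconstraint ((Real.log x : ℝ) : ℂ)
    have hexpz : Complex.exp ((Real.log x : ℝ) : ℂ) = ((x : ℝ) : ℂ) := by
      rw [← Complex.ofReal_exp, Real.exp_log hx]
    have hexpnz : Complex.exp (-((Real.log x : ℝ) : ℂ)) = ((x⁻¹ : ℝ) : ℂ) := by
      rw [show -((Real.log x : ℝ) : ℂ) = ((-Real.log x : ℝ) : ℂ) from by push_cast; ring,
        ← Complex.ofReal_exp, Real.exp_neg, Real.exp_log hx]
    rw [hexpz, hexpnz] at hz
    rw [show ((Real.log x : ℝ) : ℂ).re = Real.log x from Complex.ofReal_re _] at hz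
    rw [show Real.exp (2 * Real.log x) = x * x from by
      rw [two_mul, Real.exp_add, Real.exp_log hx]] at hz
    simp only [Complex.add_im, Complex.mul_im, Complex.ofReal_re, Complex.ofReal_im,
      mul_zero, zero_mul, add_zero, zero_add] at hz
    have hsimp : (x * x) * (γ.im + δ.im * x⁻¹) = (x * x) * γ.im + x * δ.im := by
      field_simp
    -- hz : α.im + β.im * x + (x*x) * (γ.im + δ.im * x⁻¹) = 0
    nlinarith [hz, hsimp]
  have e1 := hval1 1 one_pos
  have e2 := hval1 2 two_pos
  have e3 := hval1 3 (by norm_num)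
  have hαim : α.im = 0 := by linarith
  have hγim : γ.im = 0 := by linarith
  have hβδim : β.im = -δ.im := by linarith
  -- fourth evaluation point
  have hβδre : β.re = δ.re := by
    have hz4 := hconstraint (((Real.pi / 2 : ℝ) : ℂ) * Complex.I)
    have hre4 : ((((Real.pi / 2 : ℝ) : ℂ)) * Complex.I).re = 0 := by simp
    have hexp4 : Complex.exp ((((Real.pi / 2 : ℝ) : ℂ)) * Complex.I) = Complex.I := by
      rw [Complex.exp_mul_I, ← Complex.ofReal_cos, ← Complex.ofReal_sin,
        Real.cos_pi_div_two, Real.sin_pi_div_two]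
      simp
    have hexp4' : Complex.exp (-((((Real.pi / 2 : ℝ) : ℂ)) * Complex.I)) = -Complex.I := by
      rw [show -((((Real.pi / 2 : ℝ) : ℂ)) * Complex.I)
            = (((-(Real.pi / 2) : ℝ)) : ℂ) * Complex.I from by push_cast; ring,
        Complex.exp_mul_I, ← Complex.ofReal_cos, ← Complex.ofReal_sin,
        Real.cos_neg, Real.sin_neg, Real.cos_pi_div_two, Real.sin_pi_div_two]
      simp
    rw [hre4, hexp4, hexp4'] at hz4
    simp only [Complex.add_im, Complex.mul_im, Complex.I_re, Complex.I_im, Complex.neg_re,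
      Complex.neg_im, mul_zero, mul_one, zero_add, mul_neg, neg_zero, add_zero,
      Real.exp_zero, one_mul] at hz4
    linarith [hz4, hαim, hγim]
  -- integrate A
  have hAint : ∀ z : ℂ, A z = A 0 + α * z + β * (Complex.exp z - 1) := by
    have hdW : Differentiable ℂ (fun z => A z - (α * z + β * (Complex.exp z - 1))) :=
      hA.sub (((differentiable_id.const_mul α)).add
        ((Complex.differentiable_exp.sub_const 1).const_mul β))
    have hder : ∀ z, deriv (fun z => A z - (α * z + β * (Complex.exp z - 1))) z = 0 := by
      intro z
      have h1 : HasDerivAt (fun z : ℂ => A z - (α * z + β * (Complex.exp z - 1)))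
          (P z - (α * 1 + β * Complex.exp z)) z := by
        apply HasDerivAt.sub
        · exact (hA z).hasDerivAt
        · exact ((hasDerivAt_id z).const_mul α).add
            (((Complex.hasDerivAt_exp z).sub_const 1).const_mul β)
      rw [h1.deriv, hPform z]
      ring
    intro z
    have hc := entire_const hdW hder z
    have h0 : A 0 - (α * 0 + β * (Complex.exp 0 - 1)) = A 0 := by simp
    rw [h0] at hc
    linear_combination hc
  -- integrate B (via E = e^{-z} B)
  have hEint : ∀ z : ℂ, Complex.exp (-z) * B z = B 0 + γ * z + δ * (1 - Complex.exp (-z)) := by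
    have hexpnegd : Differentiable ℂ (fun z : ℂ => Complex.exp (-z)) :=
      Complex.differentiable_exp.comp differentiable_neg
    have hdE : Differentiable ℂ (fun z => Complex.exp (-z) * B z
        - (γ * z + δ * (1 - Complex.exp (-z)))) :=
      (hexpnegd.mul hB).sub ((differentiable_id.const_mul γ).add
        (((differentiable_const (1 : ℂ)).sub hexpnegd).const_mul δ))
    have hder : ∀ z, deriv (fun z => Complex.exp (-z) * B z
        - (γ * z + δ * (1 - Complex.exp (-z)))) z = 0 := by
      intro z
      have hexpneg : HasDerivAt (fun z : ℂ => Complex.exp (-z)) (-Complex.exp (-z)) z := by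
        have := (Complex.hasDerivAt_exp (-z)).comp z (hasDerivAt_neg z)
        rw [show -Complex.exp (-z) = Complex.exp (-z) * -1 by ring]; exact this
      have h1 : HasDerivAt (fun z : ℂ => Complex.exp (-z) * B z
          - (γ * z + δ * (1 - Complex.exp (-z))))
          ((-Complex.exp (-z)) * B z + Complex.exp (-z) * deriv B z
            - (γ * 1 + δ * (0 - -Complex.exp (-z)))) z := by
        apply HasDerivAt.sub
        · exact hexpneg.mul (hB z).hasDerivAt
        · exact ((hasDerivAt_id z).const_mul γ).add
            (((hasDerivAt_const z (1 : ℂ)).sub hexpneg).const_mul δ)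
      rw [h1.deriv]
      have hQz := hQform z
      simp only [hQdef, hGdef] at hQz
      linear_combination hQz
    intro z
    have hc := entire_const hdE hder z
    have h0 : Complex.exp (-(0 : ℂ)) * B 0 - (γ * 0 + δ * (1 - Complex.exp (-(0 : ℂ)))) = B 0 := by
      simp
    rw [h0] at hc
    linear_combination hc
  -- final assembly
  refine ⟨(A 0).re - β.re, (B 0).re + δ.re, α.re, γ.re, ?_⟩
  intro z
  have hconjexp : (starRingEnd ℂ) (Complex.exp z)
      = (Real.exp (2 * z.re) : ℂ) * Complex.exp (-z) := by
    rw [← Complex.exp_conj, ← expsum z, ← Complex.exp_add,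
      show z + (starRingEnd ℂ) z + -z = (starRingEnd ℂ) z from by ring]
  have hre1 : (Complex.exp z).re = Real.exp (2 * z.re) * (Complex.exp (-z)).re := by
    have := congrArg Complex.re hconjexp
    rwa [Complex.conj_re, Complex.re_ofReal_mul] at this
  have him1 : (Complex.exp z).im = -(Real.exp (2 * z.re) * (Complex.exp (-z)).im) := by
    have := congrArg Complex.im hconjexp
    rw [Complex.conj_im, Complex.im_ofReal_mul] at this
    linarith
  have hBz : (starRingEnd ℂ) (Complex.exp z) * B z
      = (Real.exp (2 * z.re) : ℂ) * (Complex.exp (-z) * B z) := by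
    rw [hconjexp]; ring
  show ((A z).re + ((starRingEnd ℂ) (Complex.exp z) * B z).re) / (1 + Real.exp (2 * z.re)) = _
  rw [hBz, hEint z, hAint z]
  congr 1
  simp only [Complex.add_re, Complex.sub_re, Complex.mul_re, Complex.one_re, Complex.one_im,
    Complex.ofReal_re, Complex.ofReal_im, Complex.add_im, Complex.sub_im, Complex.mul_im,
    zero_mul, mul_zero, sub_zero, zero_sub, add_zero, zero_add, Complex.exp_zero]
  rw [hαim, hγim, hβδre, hβδim, hre1, him1]
  ring
end
end

section
/- Let U ⊆ ℂ be open, g : U → ℂ holomorphic with g'(z) ≠ 0 for all z ∈ U, and f a holomorphic function defined on an open set containing g(U). Then the function h(u,v) = ⟨1, f'(g(z))⟩ − 2 ⟨g(z), f(g(z))⟩ / ( 1 + |g(z)|² ), z = u+iv, i.e. h = Re(f'∘g) − 2 Re( ḡ · (f∘g) )/(1+|g|²), satisfies the Helmholtz equation Δh + ( 8|g'|² / (1+|g|²)² ) h = 0 on U; consequently the associated surface is an H₁-surface. -/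
open Complex

noncomputable section

/-! The Laplacian is conformally covariant: for holomorphic `g`, the Hessian terms of
`Δ(φ ∘ g)` combine to `|g'|² (Δφ) ∘ g` because multiplication by `g'` is a rotation-dilation,
and the first-order terms `Dφ(g'')` and `Dφ(I² g'')` cancel. Since the `h` of the theorem is
`h₀ ∘ g` with `h₀(w) = Re f'(w) - 2⟨w, f(w)⟩/(1+|w|²)`, it remains to check
`Δh₀ + 8/(1+|w|²)² h₀ = 0`, a direct computation in which `f'''` drops out because
`Re f''' + Re (I² f''') = 0`. -/

open Filter Topology InnerProductSpace

theorem inn_eq_inner_s13 (a b : ℂ) : inn a b = ⟪a, b⟫_ℝ := by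
  rw [Complex.inner, mul_comm]
  rfl

theorem IsOpen.differentiableOn_of_hasDerivAt {V : Set ℂ} (hV : IsOpen V) {F F' : ℂ → ℂ}
    (hF : ∀ w ∈ V, HasDerivAt F (F' w) w) : DifferentiableOn ℂ F' V :=
  (DifferentiableOn.deriv (fun w hw => (hF w hw).differentiableAt.differentiableWithinAt) hV).congr
    fun w hw => (hF w hw).deriv.symm

theorem contDiffAt_of_hasDerivAt {G G' : ℂ → ℂ} {V : Set ℂ} {w : ℂ} {n : WithTop ℕ∞}
    (hV : V ∈ 𝓝 w) (hG : ∀ v ∈ V, HasDerivAt G (G' v) v) : ContDiffAt ℝ n G w :=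
  ((DifferentiableOn.analyticAt (fun v hv => (hG v hv).differentiableAt.differentiableWithinAt)
    hV).contDiffAt).restrict_scalars ℝ

theorem lap_eq_fderiv_fderiv {φ : ℂ → ℝ} {x : ℂ} (hφ : DifferentiableAt ℝ (fderiv ℝ φ) x) :
    lap φ x = fderiv ℝ (fderiv ℝ φ) x 1 1 + fderiv ℝ (fderiv ℝ φ) x I I := by
  show fderiv ℝ (fun w => fderiv ℝ φ w 1) x 1 + fderiv ℝ (fun w => fderiv ℝ φ w I) x I = _
  rw [fderiv_clm_apply hφ (differentiableAt_const _),
    fderiv_clm_apply hφ (differentiableAt_const _)]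
  simp

theorem ContinuousLinearMap.apply_self_add_apply_I_mul_self {B : ℂ →L[ℝ] ℂ →L[ℝ] ℝ}
    (hB : ∀ v w, B v w = B w v) (c : ℂ) :
    B c c + B (I * c) (I * c) = ‖c‖ ^ 2 * (B 1 1 + B I I) := by
  have hc : c.re • (1 : ℂ) + c.im • I = c := by apply Complex.ext <;> simp
  have hIc : (-c.im) • (1 : ℂ) + c.re • I = I * c := by apply Complex.ext <;> simp
  have hexpand : ∀ a b : ℝ, B (a • 1 + b • I) (a • 1 + b • I)
      + B ((-b) • 1 + a • I) ((-b) • 1 + a • I) = (a ^ 2 + b ^ 2) * (B 1 1 + B I I) := by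
    intro a b
    simp only [map_add, map_smul, add_apply, smul_apply, smul_eq_mul, hB I 1]
    ring
  have hcoord := hexpand c.re c.im
  rw [hc, hIc] at hcoord
  rw [hcoord, Complex.sq_norm, Complex.normSq_apply]
  ring

theorem lap_comp_of_hasDerivAt {φ : ℂ → ℝ} {g g' : ℂ → ℂ} {g'' z : ℂ} {U : Set ℂ}
    (hU : U ∈ 𝓝 z) (hg : ∀ w ∈ U, HasDerivAt g (g' w) w) (hg' : HasDerivAt g' g'' z)
    (hφ : ContDiffAt ℝ 2 φ (g z)) :
    lap (φ ∘ g) z = ‖g' z‖ ^ 2 * lap φ (g z) := by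
  have hgz := hg z (mem_of_mem_nhds hU)
  have hφd : ∀ᶠ w in 𝓝 z, DifferentiableAt ℝ φ (g w) :=
    hgz.continuousAt.eventually
      ((hφ.eventually (by simp)).mono fun y hy => hy.differentiableAt (by simp))
  have hφ2 : DifferentiableAt ℝ (fderiv ℝ φ) (g z) :=
    (hφ.fderiv_right (m := 1) (by norm_num)).differentiableAt (by simp)
  have hpd : ∀ t, (fun w => fderiv ℝ (φ ∘ g) w t) =ᶠ[𝓝 z]
      fun w => fderiv ℝ φ (g w) (t * g' w) := by
    intro t
    filter_upwards [hU, hφd] with w hw hφw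
    rw [(hφw.hasFDerivAt.comp w ((hg w hw).hasFDerivAt.restrictScalars ℝ)).fderiv]
    simp
  have hD := fun t : ℂ =>
    (hφ2.hasFDerivAt.comp z (hgz.hasFDerivAt.restrictScalars ℝ)).clm_apply
      (c := fun w => fderiv ℝ φ (g w)) ((hg'.hasFDerivAt.restrictScalars ℝ).const_mul t)
  show fderiv ℝ (fun w => fderiv ℝ (φ ∘ g) w 1) z 1
    + fderiv ℝ (fun w => fderiv ℝ (φ ∘ g) w I) z I = _
  rw [(hpd 1).fderiv_eq, (hpd I).fderiv_eq, (hD 1).fderiv, (hD I).fderiv,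
    lap_eq_fderiv_fderiv hφ2]
  simp only [one_smul, one_mul, add_apply, ContinuousLinearMap.comp_apply,
    ContinuousLinearMap.coe_restrictScalars', ContinuousLinearMap.toSpanSingleton_apply,
    smul_eq_mul, ContinuousLinearMap.flip_apply, smul_apply]
  rw [← mul_assoc, I_mul_I, neg_one_mul, map_neg,
    ← (fderiv ℝ (fderiv ℝ φ) (g z)).apply_self_add_apply_I_mul_self
      (hφ.isSymmSndFDerivAt (by simp))]
  ring

def sphericalH (F F' : ℂ → ℂ) (w : ℂ) : ℝ := inn 1 (F' w) - 2 * inn w (F w) / (1 + ‖w‖ ^ 2)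

def sphericalHDeriv (F F' F'' : ℂ → ℂ) (t w : ℂ) : ℝ :=
  inn 1 (F'' w * t) - 2 * ((inn t (F w) + inn w (F' w * t)) / (1 + ‖w‖ ^ 2)
    - inn w (F w) * (2 * inn w t) / (1 + ‖w‖ ^ 2) ^ 2)

theorem fderiv_sphericalH_apply {F F' F'' : ℂ → ℂ} {w : ℂ} (hF : HasDerivAt F (F' w) w)
    (hF' : HasDerivAt F' (F'' w) w) (t : ℂ) :
    fderiv ℝ (sphericalH F F') w t = sphericalHDeriv F F' F'' t w := by
  have hρ : 1 + ‖w‖ ^ 2 ≠ 0 := by positivity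
  have hid := hasFDerivAt_id (𝕜 := ℝ) w
  have hA := (hasFDerivAt_const (1 : ℂ) w).inner ℝ (hF'.hasFDerivAt.restrictScalars ℝ)
  have hB := ((hid.inner ℝ (hF.hasFDerivAt.restrictScalars ℝ)).const_mul 2).mul
    ((hasDerivAt_inv hρ).comp_hasFDerivAt w ((hid.norm_sq).const_add 1))
  have h : HasFDerivAt (fun w => ⟪(1 : ℂ), F' w⟫_ℝ - 2 * ⟪w, F w⟫_ℝ * (1 + ‖w‖ ^ 2)⁻¹) _ w :=
    hA.sub hB
  have heq : sphericalH F F' = fun w => ⟪(1 : ℂ), F' w⟫_ℝ - 2 * ⟪w, F w⟫_ℝ * (1 + ‖w‖ ^ 2)⁻¹ := by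
    ext w
    simp [sphericalH, inn_eq_inner_s13, div_eq_mul_inv]
  rw [heq, h.fderiv]
  simp only [sub_apply, add_apply, smul_apply, zero_apply, ContinuousLinearMap.comp_apply,
    ContinuousLinearMap.prod_apply, ContinuousLinearMap.id_apply,
    ContinuousLinearMap.coe_restrictScalars', ContinuousLinearMap.toSpanSingleton_apply,
    fderivInnerCLM_apply, coe_innerSL_apply, smul_eq_mul, nsmul_eq_mul, Function.comp_apply, id_eq,
    inner_zero_left]
  simp only [sphericalHDeriv, inn_eq_inner_s13, Complex.inner, Complex.sq_norm, normSq_apply, mul_re,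
    mul_im, conj_re, conj_im, one_re, one_im]
  field_simp
  ring

theorem contDiffAt_sphericalH {F F' F'' : ℂ → ℂ} {V : Set ℂ} {w : ℂ} (hV : V ∈ 𝓝 w)
    (hF : ∀ v ∈ V, HasDerivAt F (F' v) v) (hF' : ∀ v ∈ V, HasDerivAt F' (F'' v) v) :
    ContDiffAt ℝ 2 (sphericalH F F') w := by
  have hρ : 1 + ‖w‖ ^ 2 ≠ 0 := by positivity
  unfold sphericalH
  simp only [inn_eq_inner_s13]
  exact (contDiffAt_const.inner ℝ (contDiffAt_of_hasDerivAt hV hF')).sub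
    ((contDiffAt_const.mul (contDiffAt_id.inner ℝ (contDiffAt_of_hasDerivAt hV hF))).div
      (contDiffAt_const.add (contDiff_norm_sq ℝ).contDiffAt) hρ)

theorem lap_sphericalH_add {F F' F'' : ℂ → ℂ} {F''' w : ℂ} {V : Set ℂ} (hV : V ∈ 𝓝 w)
    (hF : ∀ v ∈ V, HasDerivAt F (F' v) v) (hF' : ∀ v ∈ V, HasDerivAt F' (F'' v) v)
    (hF'' : HasDerivAt F'' F''' w) :
    lap (sphericalH F F') w + 8 / (1 + ‖w‖ ^ 2) ^ 2 * sphericalH F F' w = 0 := by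
  have hw := mem_of_mem_nhds hV
  have hρ : 1 + ‖w‖ ^ 2 ≠ 0 := by positivity
  have hid := hasFDerivAt_id (𝕜 := ℝ) w
  have hFR := (hF w hw).hasFDerivAt.restrictScalars ℝ
  have hρ' := (hid.norm_sq).const_add 1
  have hρinv := (hasDerivAt_inv hρ).comp_hasFDerivAt w hρ'
  have hρinv2 := (hasDerivAt_inv (pow_ne_zero 2 hρ)).comp_hasFDerivAt w (hρ'.pow 2)
  have hD : ∀ t : ℂ, HasFDerivAt (sphericalHDeriv F F' F'' t) _ w := fun t => by
    have hF'R := ((hF' w hw).hasFDerivAt.restrictScalars ℝ).mul_const t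
    have hF''R := (hF''.hasFDerivAt.restrictScalars ℝ).mul_const t
    have hct := hasFDerivAt_const (𝕜 := ℝ) t w
    have hA := (hasFDerivAt_const (𝕜 := ℝ) (1 : ℂ) w).inner ℝ hF''R
    have hB := ((hct.inner ℝ hFR).add (hid.inner ℝ hF'R)).mul hρinv
    have hC := ((hid.inner ℝ hFR).mul ((hid.inner ℝ hct).const_mul 2)).mul hρinv2
    have h : HasFDerivAt (fun w => ⟪(1 : ℂ), F'' w * t⟫_ℝ
        - 2 * ((⟪t, F w⟫_ℝ + ⟪w, F' w * t⟫_ℝ) * (1 + ‖w‖ ^ 2)⁻¹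
          - ⟪w, F w⟫_ℝ * (2 * ⟪w, t⟫_ℝ) * ((1 + ‖w‖ ^ 2) ^ 2)⁻¹)) _ w :=
      hA.sub ((hB.sub hC).const_mul 2)
    convert h using 1
    ext v
    simp [sphericalHDeriv, inn_eq_inner_s13, div_eq_mul_inv]
  have hpd : ∀ t, (fun v => fderiv ℝ (sphericalH F F') v t) =ᶠ[𝓝 w] sphericalHDeriv F F' F'' t :=
    fun t => by filter_upwards [hV] with v hv using fderiv_sphericalH_apply (hF v hv) (hF' v hv) t
  show fderiv ℝ (fun v => fderiv ℝ (sphericalH F F') v 1) w 1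
    + fderiv ℝ (fun v => fderiv ℝ (sphericalH F F') v I) w I + _ = 0
  rw [(hpd 1).fderiv_eq, (hpd I).fderiv_eq, (hD 1).fderiv, (hD I).fderiv]
  simp only [sub_apply, add_apply, smul_apply, zero_apply, ContinuousLinearMap.comp_apply,
    ContinuousLinearMap.prod_apply, ContinuousLinearMap.id_apply,
    ContinuousLinearMap.coe_restrictScalars', ContinuousLinearMap.toSpanSingleton_apply,
    fderivInnerCLM_apply, coe_innerSL_apply, smul_eq_mul, nsmul_eq_mul, Function.comp_apply,
    Pi.add_apply, Pi.mul_apply, id_eq, inner_zero_left, inner_zero_right, Nat.add_one_sub_one,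
    pow_one]
  simp only [sphericalH, inn_eq_inner_s13, Complex.inner, Complex.sq_norm, normSq_apply, mul_re, mul_im,
    conj_re, conj_im, I_re, I_im, one_re, one_im]
  field_simp
  ring

theorem stmt_13_general (U V : Set ℂ) (hU : IsOpen U) (hV : IsOpen V)
    (g g' : ℂ → ℂ) (hg : ∀ z ∈ U, HasDerivAt g (g' z) z)
    (hmaps : Set.MapsTo g U V)
    (f f' : ℂ → ℂ) (hf : ∀ w ∈ V, HasDerivAt f (f' w) w) :
    ∀ z ∈ U,
      lap (fun w =>
          inn 1 (f' (g w)) - 2 * inn (g w) (f (g w)) / (1 + ‖g w‖ ^ 2)) z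
        + (8 * ‖g' z‖ ^ 2 / (1 + ‖g z‖ ^ 2) ^ 2) *
          (inn 1 (f' (g z)) - 2 * inn (g z) (f (g z)) / (1 + ‖g z‖ ^ 2)) = 0 := by
  intro z hz
  have hf' : ∀ w ∈ V, HasDerivAt f' (deriv f' w) w := fun w hw =>
    ((hV.differentiableOn_of_hasDerivAt hf).differentiableAt (hV.mem_nhds hw)).hasDerivAt
  have hf'' : ∀ w ∈ V, HasDerivAt (deriv f') (deriv (deriv f') w) w := fun w hw =>
    ((hV.differentiableOn_of_hasDerivAt hf').differentiableAt (hV.mem_nhds hw)).hasDerivAt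
  have hg' : HasDerivAt g' (deriv g' z) z :=
    ((hU.differentiableOn_of_hasDerivAt hg).differentiableAt (hU.mem_nhds hz)).hasDerivAt
  have hVgz : V ∈ 𝓝 (g z) := hV.mem_nhds (hmaps hz)
  have hconformal :=
    lap_comp_of_hasDerivAt (hU.mem_nhds hz) hg hg' (contDiffAt_sphericalH hVgz hf hf')
  have hmodel := lap_sphericalH_add hVgz hf hf' (hf'' _ (hmaps hz))
  change lap (sphericalH f f' ∘ g) z + _ * sphericalH f f' (g z) = 0
  rw [hconformal, eq_neg_of_add_eq_zero_left hmodel]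
  ring

/-- Proposition 3.7: h = ⟨1, f'∘g⟩ − 2⟨g, f∘g⟩/(1+|g|²) solves the
Helmholtz equation Δh + (8|g'|²/(1+|g|²)²)h = 0, so the associated surface is an
H₁-surface. -/
theorem stmt_13 (U V : Set ℂ) (hU : IsOpen U) (hV : IsOpen V)
    (g g' : ℂ → ℂ) (hg : ∀ z ∈ U, HasDerivAt g (g' z) z) (hg' : ∀ z ∈ U, g' z ≠ 0)
    (hmaps : Set.MapsTo g U V)
    (f f' : ℂ → ℂ) (hf : ∀ w ∈ V, HasDerivAt f (f' w) w) :
    ∀ z ∈ U,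
      lap (fun w =>
          inn 1 (f' (g w)) - 2 * inn (g w) (f (g w)) / (1 + ‖g w‖ ^ 2)) z
        + (8 * ‖g' z‖ ^ 2 / (1 + ‖g z‖ ^ 2) ^ 2) *
          (inn 1 (f' (g z)) - 2 * inn (g z) (f (g z)) / (1 + ‖g z‖ ^ 2)) = 0 :=
  stmt_13_general U V hU hV g g' hg hmaps f f' hf
end
end

section
/- Let n ≥ 1, U ⊆ ℝⁿ open, J : ℝ → ℝ differentiable, and define h : U → ℝ by h(u) = J(|u|²). Let Y : U → ℝⁿ × ℝ ≅ ℝ^{n+1} be the inverse stereographic projection Y(u) = ( 2u, 1−|u|² )/( 1+|u|² ), let L = 4/(1+|u|²)², and define η : U → ℝ^{n+1} by η = Σᵢ (h_{,i}/L) Y_{,i} + h Y (that is, η = ∇_L h + hY). Then, writing t = |u|², η(u) = ( ( J'(t)(1−t) + 2J(t)/(1+t) ) u , −2t J'(t) + J(t)(1−t)/(1+t) ). -/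
/-!
Since `∂ᵢh = 2 J'(t) uᵢ` with `t = |u|²`, linearity of `DY` collapses `∑ᵢ (∂ᵢh / L) Y_{,i}` to
`(2 J'(t) / L) · DY(u)`, and the radial derivative of the inverse stereographic projection is
`DY(u) = (2(1 - t)/(1 + t)² · u, -4t/(1 + t)²)`. Dividing by `L = 4/(1 + t)²` and adding `h · Y`
gives the formula.
-/

section InnerProductSpace

variable {E : Type*} [NormedAddCommGroup E] [InnerProductSpace ℝ E]

theorem hasFDerivAt_comp_norm_sq {J : ℝ → ℝ} {u : E} (hJ : DifferentiableAt ℝ J (‖u‖ ^ 2)) :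
    HasFDerivAt (fun x : E => J (‖x‖ ^ 2)) ((2 * deriv J (‖u‖ ^ 2)) • innerSL ℝ u) u := by
  have := hJ.hasDerivAt.comp_hasFDerivAt u (hasStrictFDerivAt_norm_sq u).hasFDerivAt
  rw [two_nsmul, smul_add, ← two_smul ℝ, smul_smul] at this
  exact this

theorem hasDerivAt_two_div_one_add {t : ℝ} (ht : 1 + t ≠ 0) :
    HasDerivAt (fun s : ℝ => 2 / (1 + s)) (-2 / (1 + t) ^ 2) t := by
  refine ((hasDerivAt_const t (2 : ℝ)).div ((hasDerivAt_id t).const_add 1) ht).congr_deriv ?_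
  simp

theorem hasDerivAt_one_sub_div_one_add {t : ℝ} (ht : 1 + t ≠ 0) :
    HasDerivAt (fun s : ℝ => (1 - s) / (1 + s)) (-2 / (1 + t) ^ 2) t := by
  refine (((hasDerivAt_id t).const_sub 1).div ((hasDerivAt_id t).const_add 1) ht).congr_deriv ?_
  simp only [id]
  ring

noncomputable def invStereographic (u : E) : E × ℝ :=
  ((2 / (1 + ‖u‖ ^ 2)) • u, (1 - ‖u‖ ^ 2) / (1 + ‖u‖ ^ 2))

theorem hasFDerivAt_invStereographic (u : E) :
    HasFDerivAt invStereographic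
      (((2 / (1 + ‖u‖ ^ 2)) • ContinuousLinearMap.id ℝ E
          + ((-4 / (1 + ‖u‖ ^ 2) ^ 2) • innerSL ℝ u).smulRight u).prod
        ((-4 / (1 + ‖u‖ ^ 2) ^ 2) • innerSL ℝ u)) u := by
  have ht : 1 + ‖u‖ ^ 2 ≠ 0 := by positivity
  have hN := (hasStrictFDerivAt_norm_sq u).hasFDerivAt
  have hc := (hasDerivAt_two_div_one_add ht).comp_hasFDerivAt u hN
  have hg := (hasDerivAt_one_sub_div_one_add ht).comp_hasFDerivAt u hN
  have h4 : (-2 / (1 + ‖u‖ ^ 2) ^ 2) • (2 • innerSL ℝ u) =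
      (-4 / (1 + ‖u‖ ^ 2) ^ 2) • innerSL ℝ u := by
    rw [two_nsmul, smul_add, ← two_smul ℝ, smul_smul]; ring_nf
  rw [h4] at hc hg
  exact (hc.smul (hasFDerivAt_id u)).prodMk hg

theorem fderiv_invStereographic_apply_self (u : E) :
    fderiv ℝ invStereographic u u =
      ((2 * (1 - ‖u‖ ^ 2) / (1 + ‖u‖ ^ 2) ^ 2) • u, -4 * ‖u‖ ^ 2 / (1 + ‖u‖ ^ 2) ^ 2) := by
  have ht : 1 + ‖u‖ ^ 2 ≠ 0 := by positivity
  rw [(hasFDerivAt_invStereographic u).fderiv]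
  simp only [ContinuousLinearMap.prod_apply, add_apply, smul_apply, ContinuousLinearMap.id_apply,
    ContinuousLinearMap.smulRight_apply, innerSL_apply_apply, real_inner_self_eq_norm_sq,
    smul_eq_mul, ← add_smul]
  congr 1
  · congr 1; field_simp; ring
  · ring

end InnerProductSpace

theorem EuclideanSpace.sum_inner_single_smul {ι F : Type*} [Fintype ι] [DecidableEq ι]
    [AddCommGroup F] [Module ℝ F] [TopologicalSpace F] (A : EuclideanSpace ℝ ι →L[ℝ] F)
    (u : EuclideanSpace ℝ ι) :
    ∑ i, inner ℝ u (EuclideanSpace.single i 1) • A (EuclideanSpace.single i 1) = A u := by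
  conv_rhs => rw [← (EuclideanSpace.basisFun ι ℝ).sum_repr' u]
  simp [real_inner_comm]

theorem stmt_14_general (n : ℕ)
    (U : Set (EuclideanSpace ℝ (Fin n)))
    (J : ℝ → ℝ) (hJ : Differentiable ℝ J) :
    let h : EuclideanSpace ℝ (Fin n) → ℝ := fun u => J (‖u‖ ^ 2)
    let Y : EuclideanSpace ℝ (Fin n) → EuclideanSpace ℝ (Fin n) × ℝ := fun u =>
      ((2 / (1 + ‖u‖ ^ 2)) • u, (1 - ‖u‖ ^ 2) / (1 + ‖u‖ ^ 2))
    let L : EuclideanSpace ℝ (Fin n) → ℝ := fun u => 4 / (1 + ‖u‖ ^ 2) ^ 2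
    let η : EuclideanSpace ℝ (Fin n) → EuclideanSpace ℝ (Fin n) × ℝ := fun u =>
      (∑ i : Fin n,
        (fderiv ℝ h u (EuclideanSpace.single i 1) / L u) •
          fderiv ℝ Y u (EuclideanSpace.single i 1)) + h u • Y u
    ∀ u ∈ U,
      η u = ((deriv J (‖u‖ ^ 2) * (1 - ‖u‖ ^ 2) + 2 * J (‖u‖ ^ 2) / (1 + ‖u‖ ^ 2)) • u,
             -2 * ‖u‖ ^ 2 * deriv J (‖u‖ ^ 2)
               + J (‖u‖ ^ 2) * ((1 - ‖u‖ ^ 2) / (1 + ‖u‖ ^ 2))) := by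
  intro h Y L η u _
  have hY : Y = invStereographic := rfl
  have hgrad : ∑ i : Fin n, (fderiv ℝ h u (EuclideanSpace.single i 1) / L u) •
      fderiv ℝ Y u (EuclideanSpace.single i 1) =
      (2 * deriv J (‖u‖ ^ 2) / L u) • fderiv ℝ Y u u := by
    rw [(hasFDerivAt_comp_norm_sq (hJ _)).fderiv,
      ← EuclideanSpace.sum_inner_single_smul (fderiv ℝ Y u) u, Finset.smul_sum]
    simp only [smul_apply, innerSL_apply_apply, smul_eq_mul, smul_smul, mul_div_right_comm]
  have ht : 1 + ‖u‖ ^ 2 ≠ 0 := by positivity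
  change _ + h u • Y u = _
  rw [hgrad, hY, fderiv_invStereographic_apply_self]
  simp only [invStereographic, h, L, Prod.smul_mk, smul_smul, ← add_smul, Prod.mk_add_mk,
    smul_eq_mul]
  congr 2
  · field_simp; ring
  · field_simp

/-- computation in Lemma 2.5: for a radial function h(u) = J(|u|²), the
hypersurface η = ∇_L h + hY, with Y the inverse stereographic projection and
L = 4/(1+|u|²)², is given by
η(u) = ((J'(t)(1−t) + 2J(t)/(1+t))·u, −2tJ'(t) + J(t)(1−t)/(1+t)), t = |u|². -/
theorem stmt_14 (n : ℕ) (hn : 1 ≤ n)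
    (U : Set (EuclideanSpace ℝ (Fin n))) (hU : IsOpen U)
    (J : ℝ → ℝ) (hJ : Differentiable ℝ J) :
    let h : EuclideanSpace ℝ (Fin n) → ℝ := fun u => J (‖u‖ ^ 2)
    let Y : EuclideanSpace ℝ (Fin n) → EuclideanSpace ℝ (Fin n) × ℝ := fun u =>
      ((2 / (1 + ‖u‖ ^ 2)) • u, (1 - ‖u‖ ^ 2) / (1 + ‖u‖ ^ 2))
    let L : EuclideanSpace ℝ (Fin n) → ℝ := fun u => 4 / (1 + ‖u‖ ^ 2) ^ 2
    let η : EuclideanSpace ℝ (Fin n) → EuclideanSpace ℝ (Fin n) × ℝ := fun u =>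
      (∑ i : Fin n,
        (fderiv ℝ h u (EuclideanSpace.single i 1) / L u) •
          fderiv ℝ Y u (EuclideanSpace.single i 1)) + h u • Y u
    ∀ u ∈ U,
      η u = ((deriv J (‖u‖ ^ 2) * (1 - ‖u‖ ^ 2) + 2 * J (‖u‖ ^ 2) / (1 + ‖u‖ ^ 2)) • u,
             -2 * ‖u‖ ^ 2 * deriv J (‖u‖ ^ 2)
               + J (‖u‖ ^ 2) * ((1 - ‖u‖ ^ 2) / (1 + ‖u‖ ^ 2))) :=
  stmt_14_general n U J hJ
end

section
/- Let a₁, a₂ ∈ ℝ, let g : ℂ → ℂ be g(z) = e^z, and let h(u,v) = a₁ − ( a₂ + a₁(u−1) ) tanh(u). Set T = 1+e^{2u}, L = 4e^{2u}/T², Y = (2e^z/T, (2−T)/T) : ℂ → ℂ × ℝ ≅ ℝ³, and η = (h_{,1} Y_{,1} + h_{,2} Y_{,2})/L + hY. Then η(u,v) = ( M₁(u) cos v , M₁(u) sin v , N₁(u) ) with M₁(u) = a₁ (1+e^{2u})/(2e^u) and N₁(u) = a₂ + a₁(u−1); that is, η parameterizes a rotational minimal surface (a catenoid). -/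
open Complex

noncomputable section

lemma re_comp_hasFDerivAt {f : ℝ → ℝ} {f' : ℝ} {z : ℂ} (hf : HasDerivAt f f' z.re) :
    HasFDerivAt (fun w : ℂ => f w.re) (f' • (Complex.reCLM : ℂ →L[ℝ] ℝ)) z :=
  hf.comp_hasFDerivAt z Complex.reCLM.hasFDerivAt

lemma hasDerivAt_tanh (u : ℝ) : HasDerivAt Real.tanh (1 / Real.cosh u ^ 2) u := by
  have h := (Real.hasDerivAt_sinh u).div (Real.hasDerivAt_cosh u) (Real.cosh_pos u).ne'
  have hfun : (fun x => Real.sinh x / Real.cosh x) = Real.tanh := by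
    funext x; rw [Real.tanh_eq_sinh_div_cosh]
  rw [show (Real.sinh / Real.cosh) = Real.tanh from hfun] at h
  refine h.congr_deriv ?_
  have h1 := Real.cosh_sq_sub_sinh_sq u
  have h2 := (Real.cosh_pos u).ne'
  rw [div_left_inj' (pow_ne_zero 2 h2)]
  nlinarith [h1]

lemma hasDerivAt_T (u : ℝ) :
    HasDerivAt (fun x : ℝ => 1 + Real.exp (2 * x)) (2 * Real.exp (2 * u)) u := by
  have h := ((Real.hasDerivAt_exp (2 * u)).comp u ((hasDerivAt_id u).const_mul 2)).const_add 1
  simpa [mul_comm] using h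

/-- Proposition 4.1, surface η: for g(z) = e^z and
h = a₁ − (a₂ + a₁(u−1)) tanh u, the surface η = ∇_L h + hY is the rotational surface
(M₁(u) cos v, M₁(u) sin v, N₁(u)) with M₁(u) = a₁(1+e^{2u})/(2e^u),
N₁(u) = a₂ + a₁(u−1). -/
theorem stmt_17 (a₁ a₂ : ℝ) :
    let h : ℂ → ℝ := fun z => a₁ - (a₂ + a₁ * (z.re - 1)) * Real.tanh z.re
    let T : ℂ → ℝ := fun z => 1 + Real.exp (2 * z.re)
    let L : ℂ → ℝ := fun z => 4 * Real.exp (2 * z.re) / (T z) ^ 2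
    let Y : ℂ → ℂ × ℝ := fun z => (2 * Complex.exp z / ((T z : ℝ) : ℂ), (2 - T z) / T z)
    let η : ℂ → ℂ × ℝ := fun z =>
      (pd1 h z / L z) • pdv1 Y z + (pd2 h z / L z) • pdv2 Y z + h z • Y z
    let M₁ : ℝ → ℝ := fun u => a₁ * (1 + Real.exp (2 * u)) / (2 * Real.exp u)
    let N₁ : ℝ → ℝ := fun u => a₂ + a₁ * (u - 1)
    ∀ z : ℂ,
      η z = (((M₁ z.re * Real.cos z.im : ℝ) : ℂ)
               + ((M₁ z.re * Real.sin z.im : ℝ) : ℂ) * Complex.I,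
             N₁ z.re) := by
  intro h T L Y η M₁ N₁ z
  set u := z.re with hu
  set E := Real.exp (2 * u) with hE
  have hEpos : (0:ℝ) < E := Real.exp_pos _
  have hTpos : (0:ℝ) < 1 + E := by linarith
  have hTne : (1 + E : ℝ) ≠ 0 := hTpos.ne'
  -- derivative of h
  have hlin : HasDerivAt (fun x : ℝ => a₂ + a₁ * (x - 1)) a₁ u := by
    simpa using (((hasDerivAt_id u).sub_const 1).const_mul a₁).const_add a₂
  set F' : ℝ := -(a₁ * Real.tanh u + (a₂ + a₁ * (u - 1)) * (1 / Real.cosh u ^ 2)) with hF'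
  have hF : HasDerivAt (fun x : ℝ => a₁ - (a₂ + a₁ * (x - 1)) * Real.tanh x) F' u := by
    simpa [hF'] using (hlin.mul (hasDerivAt_tanh u)).const_sub a₁
  have hh : HasFDerivAt h (F' • (Complex.reCLM : ℂ →L[ℝ] ℝ)) z := re_comp_hasFDerivAt hF
  have hpd1 : pd1 h z = F' := by
    rw [pd1, hh.fderiv]; simp
  have hpd2 : pd2 h z = 0 := by
    rw [pd2, hh.fderiv]; simp
  -- derivative of Y
  -- second component
  set G' : ℝ := ((-(2*E)) * (1+E) - (2 - (1+E)) * (2*E)) / (1+E)^2 with hG'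
  have hG : HasDerivAt (fun x : ℝ => (2 - (1 + Real.exp (2*x))) / (1 + Real.exp (2*x))) G' u :=
    ((hasDerivAt_T u).const_sub 2).div (hasDerivAt_T u) hTne
  have hY₂ : HasFDerivAt (fun w : ℂ => (2 - T w) / T w) (G' • (Complex.reCLM : ℂ →L[ℝ] ℝ)) z :=
    re_comp_hasFDerivAt hG
  -- first component
  have hinv : HasDerivAt (fun x : ℝ => (1 + Real.exp (2*x))⁻¹) (-(2*E) / (1+E)^2) u :=
    (hasDerivAt_T u).inv hTne
  have hφ : HasFDerivAt (fun w : ℂ => (T w)⁻¹) ((-(2*E)/(1+E)^2) • (Complex.reCLM : ℂ →L[ℝ] ℝ)) z :=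
    re_comp_hasFDerivAt hinv
  have hexp : HasFDerivAt (fun w : ℂ => 2 * Complex.exp w)
      (ContinuousLinearMap.restrictScalars ℝ
        ((ContinuousLinearMap.smulRight (1 : ℂ →L[ℂ] ℂ) (2 * Complex.exp z)))) z := by
    exact (((Complex.hasDerivAt_exp z).const_mul 2).hasFDerivAt).restrictScalars ℝ
  have hY₁' := hφ.smul hexp
  have hfun1 : (fun w : ℂ => 2 * Complex.exp w / ((T w : ℝ) : ℂ))
      = fun w : ℂ => (T w)⁻¹ • (2 * Complex.exp w) := by
    funext w
    simp [T, Complex.real_smul, Complex.ofReal_inv, div_eq_mul_inv, mul_comm]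
  have hY : HasFDerivAt Y (ContinuousLinearMap.prod
      (((1+E:ℝ)⁻¹) • (ContinuousLinearMap.restrictScalars ℝ
        ((ContinuousLinearMap.smulRight (1 : ℂ →L[ℂ] ℂ) (2 * Complex.exp z))))
        + (((-(2*E)/(1+E)^2) • (Complex.reCLM : ℂ →L[ℝ] ℝ)).smulRight (2 * Complex.exp z)))
      (G' • (Complex.reCLM : ℂ →L[ℝ] ℝ))) z := by
    have : Y = fun w => ((T w)⁻¹ • (2 * Complex.exp w), (2 - T w)/T w) := by
      funext w; simp only [Y]; rw [congrFun hfun1 w]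
    rw [this]
    exact (HasFDerivAt.prodMk hY₁' hY₂)
  have hpdv1 : pdv1 Y z = (((1+E:ℝ)⁻¹) • (2 * Complex.exp z)
      + ((-(2*E)/(1+E)^2) : ℝ) • (2 * Complex.exp z), G') := by
    rw [pdv1, hY.fderiv]
    simp
  have hpdv2 : pdv2 Y z = (((1+E:ℝ)⁻¹) • (Complex.I * (2 * Complex.exp z)), 0) := by
    rw [pdv2, hY.fderiv]
    simp
  have hv : η z = (F' / L z) • pdv1 Y z + h z • Y z := by
    simp only [η, hpd1, hpd2, zero_div, zero_smul, add_zero]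
  rw [hv, hpdv1]
  have hLz : L z = 4 * E / (1 + E) ^ 2 := rfl
  have hhz : h z = a₁ - (a₂ + a₁ * (u - 1)) * Real.tanh u := rfl
  have hYz : Y z = (2 * Complex.exp z / ((1 + E : ℝ) : ℂ), (2 - (1 + E)) / (1 + E)) := rfl
  rw [hLz, hhz, hYz]
  simp only [Prod.smul_mk, Prod.mk_add_mk, smul_eq_mul, Prod.mk.injEq]
  have hx2 : E = Real.exp u ^ 2 := by rw [hE, two_mul, Real.exp_add, sq]
  have hxpos : (0:ℝ) < Real.exp u := Real.exp_pos u
  have htanh : Real.tanh u = (Real.exp u - (Real.exp u)⁻¹) / (Real.exp u + (Real.exp u)⁻¹) := by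
    rw [Real.tanh_eq_sinh_div_cosh, Real.sinh_eq, Real.cosh_eq, Real.exp_neg]
    have : Real.exp u + (Real.exp u)⁻¹ ≠ 0 := by positivity
    field_simp
  have hcosh : Real.cosh u = (Real.exp u + (Real.exp u)⁻¹) / 2 := by
    rw [Real.cosh_eq, Real.exp_neg]
  have hxne : Real.exp u ≠ 0 := hxpos.ne'
  have hsumne : Real.exp u + (Real.exp u)⁻¹ ≠ 0 := by positivity
  have h1x : (1:ℝ) + Real.exp u ^ 2 ≠ 0 := by positivity
  constructor
  · have hce : Complex.exp z = (Real.exp u : ℂ) *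
        ((Real.cos z.im : ℂ) + (Real.sin z.im : ℂ) * Complex.I) := by
      apply Complex.ext <;> simp [Complex.exp_re, Complex.exp_im, hu, Complex.cos_ofReal_re, Complex.sin_ofReal_re, Complex.cos_ofReal_im, Complex.sin_ofReal_im]
    have hmain : (F' / (4 * E / (1 + E) ^ 2) * ((1 + E)⁻¹ * 2 + -(2 * E) / (1 + E) ^ 2 * 2)
        + (a₁ - (a₂ + a₁ * (u - 1)) * Real.tanh u) * (2 / (1 + E))) * Real.exp u = M₁ u := by
      simp only [M₁, hF', htanh, hcosh, hx2]
      rw [show Real.exp (2 * u) = Real.exp u ^ 2 by rw [two_mul, Real.exp_add, sq]]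
      field_simp
      ring
    rw [hce, ← hmain]
    simp only [Complex.real_smul]
    push_cast
    ring
  · have hmain : F' / (4 * E / (1 + E) ^ 2) * G'
        + (a₁ - (a₂ + a₁ * (u - 1)) * Real.tanh u) * ((2 - (1 + E)) / (1 + E)) = N₁ u := by
      simp only [N₁, hF', hG', htanh, hcosh, hx2]
      field_simp
      ring
    exact hmain
end
end

section
/- Let a₂, a₃, c₁, c₂ ∈ ℝ, let g : ℂ → ℂ be g(z) = e^z, and let h(u,v) = ( a₂ + c₁u + e^{2u}(a₃ + c₂u) ) / ( 1 + e^{2u} ). Set T = 1+e^{2u}, L = 4e^{2u}/T², Y = (2e^z/T, (2−T)/T) : ℂ → ℂ × ℝ ≅ ℝ³, and η = (h_{,1} Y_{,1} + h_{,2} Y_{,2})/L + hY. Then η(u,v) = ( M̃₁(u) cos v , M̃₁(u) sin v , Ñ₁(u) ) with M̃₁(u) = e^{−u}( e^{2u}( 2a₂ + 2a₃ + c₂ − c₂e^{2u} + 2c₂u ) + c₁( 1 + e^{2u}(2u−1) ) ) / ( 2(1+e^{2u}) ) and Ñ₁(u) = ( a₂ + c₁(u−1) − e^{2u}( a₃ +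 c₂ + c₂u ) ) / ( 1 + e^{2u} ); that is, η parameterizes a rotational Laguerre minimal surface. -/
open Complex

noncomputable section

set_option maxHeartbeats 4000000 in
/-- Theorem 5.1, surface η: for g(z) = e^z and
h = (a₂ + c₁u + e^{2u}(a₃ + c₂u))/(1+e^{2u}), the surface η = ∇_L h + hY is the
rotational Laguerre minimal surface (M̃₁(u) cos v, M̃₁(u) sin v, Ñ₁(u)). -/
theorem stmt_18 (a₂ a₃ c₁ c₂ : ℝ) :
    let h : ℂ → ℝ := fun z =>
      (a₂ + c₁ * z.re + Real.exp (2 * z.re) * (a₃ + c₂ * z.re)) / (1 + Real.exp (2 * z.re))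
    let T : ℂ → ℝ := fun z => 1 + Real.exp (2 * z.re)
    let L : ℂ → ℝ := fun z => 4 * Real.exp (2 * z.re) / (T z) ^ 2
    let Y : ℂ → ℂ × ℝ := fun z => (2 * Complex.exp z / ((T z : ℝ) : ℂ), (2 - T z) / T z)
    let η : ℂ → ℂ × ℝ := fun z =>
      (pd1 h z / L z) • pdv1 Y z + (pd2 h z / L z) • pdv2 Y z + h z • Y z
    let M₁ : ℝ → ℝ := fun u =>
      Real.exp (-u) *
          (Real.exp (2 * u) * (2 * a₂ + 2 * a₃ + c₂ - c₂ * Real.exp (2 * u) + 2 * c₂ * u)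
            + c₁ * (1 + Real.exp (2 * u) * (2 * u - 1)))
        / (2 * (1 + Real.exp (2 * u)))
    let N₁ : ℝ → ℝ := fun u =>
      (a₂ + c₁ * (u - 1) - Real.exp (2 * u) * (a₃ + c₂ + c₂ * u)) / (1 + Real.exp (2 * u))
    ∀ z : ℂ,
      η z = (((M₁ z.re * Real.cos z.im : ℝ) : ℂ)
               + ((M₁ z.re * Real.sin z.im : ℝ) : ℂ) * Complex.I,
             N₁ z.re) := by
  intro h T L Y η M₁ N₁ z
  set u := z.re with hu
  have hEpos : (0:ℝ) < Real.exp (2*u) := Real.exp_pos _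
  have hTne : (1 + Real.exp (2*u)) ≠ 0 := by positivity
  have hE : HasDerivAt (fun t : ℝ => Real.exp (2*t)) (2 * Real.exp (2*u)) u := by
    have := (Real.hasDerivAt_exp (2*u)).comp u ((hasDerivAt_id u).const_mul 2)
    simp only [Function.comp_def] at this
    simpa [mul_comm] using this
  have hT' : HasDerivAt (fun t : ℝ => 1 + Real.exp (2*t)) (2 * Real.exp (2*u)) u :=
    hE.const_add 1
  -- derivative of h
  have hnum : HasDerivAt (fun t : ℝ => a₂ + c₁*t + Real.exp (2*t)*(a₃+c₂*t))
      (c₁ + (2 * Real.exp (2*u) * (a₃+c₂*u) + Real.exp (2*u) * c₂)) u := by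
    have h1 : HasDerivAt (fun t : ℝ => a₂ + c₁*t) c₁ u := by
      simpa using ((hasDerivAt_id u).const_mul c₁).const_add a₂
    have h2 : HasDerivAt (fun t : ℝ => a₃+c₂*t) c₂ u := by
      simpa using ((hasDerivAt_id u).const_mul c₂).const_add a₃
    exact h1.add (hE.mul h2)
  have hF : HasDerivAt (fun t : ℝ => (a₂ + c₁*t + Real.exp (2*t)*(a₃+c₂*t))/(1+Real.exp (2*t)))
      (((c₁ + (2 * Real.exp (2*u) * (a₃+c₂*u) + Real.exp (2*u) * c₂)) * (1+Real.exp (2*u)) - (a₂ + c₁*u + Real.exp (2*u)*(a₃+c₂*u)) * (2*Real.exp (2*u))) / (1+Real.exp (2*u))^2) u := hnum.div hT' hTne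
  have hh : HasFDerivAt h ((((c₁ + (2 * Real.exp (2*u) * (a₃+c₂*u) + Real.exp (2*u) * c₂)) * (1+Real.exp (2*u)) - (a₂ + c₁*u + Real.exp (2*u)*(a₃+c₂*u)) * (2*Real.exp (2*u))) / (1+Real.exp (2*u))^2) • Complex.reCLM) z :=
    by have := hF.comp_hasFDerivAt z Complex.reCLM.hasFDerivAt; exact this
  have e1 : pd1 h z = ((c₁ + (2 * Real.exp (2*u) * (a₃+c₂*u) + Real.exp (2*u) * c₂)) * (1+Real.exp (2*u)) - (a₂ + c₁*u + Real.exp (2*u)*(a₃+c₂*u)) * (2*Real.exp (2*u))) / (1+Real.exp (2*u))^2 := by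
    rw [pd1, hh.fderiv]; simp
  have e2 : pd2 h z = 0 := by
    rw [pd2, hh.fderiv]; simp
  -- derivative of Y
  have hG : HasDerivAt (fun t : ℝ => (1 + Real.exp (2*t))⁻¹)
      (-(2 * Real.exp (2*u)) / (1+Real.exp (2*u))^2) u := hT'.inv hTne
  have hGc : HasFDerivAt (fun w : ℂ => (((1 + Real.exp (2*w.re))⁻¹ : ℝ) : ℂ))
      (Complex.ofRealCLM.comp ((-(2 * Real.exp (2*u)) / (1+Real.exp (2*u))^2) • Complex.reCLM)) z :=
    by have h0 := hG.comp_hasFDerivAt z Complex.reCLM.hasFDerivAt; have := Complex.ofRealCLM.hasFDerivAt.comp z h0; exact this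
  have hexp : HasFDerivAt Complex.exp
      (ContinuousLinearMap.restrictScalars ℝ
        (ContinuousLinearMap.smulRight (1 : ℂ →L[ℂ] ℂ) (Complex.exp z))) z :=
    (Complex.hasDerivAt_exp z).hasFDerivAt.restrictScalars ℝ
  have htwo := hexp.const_mul (2:ℂ)
  have hY1' := htwo.mul hGc
  have hY1 : HasFDerivAt (fun w : ℂ => 2 * Complex.exp w / (((1 + Real.exp (2*w.re)) : ℝ) : ℂ))
      ((2 * Complex.exp z) •
          Complex.ofRealCLM.comp ((-(2 * Real.exp (2*u)) / (1+Real.exp (2*u))^2) • Complex.reCLM) +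
        (((1 + Real.exp (2*z.re))⁻¹ : ℝ) : ℂ) •
          (2:ℂ) • ContinuousLinearMap.restrictScalars ℝ
            (ContinuousLinearMap.smulRight (1 : ℂ →L[ℂ] ℂ) (Complex.exp z))) z := by
    refine hY1'.congr_of_eventuallyEq (Filter.Eventually.of_forall fun w => ?_)
    simp [div_eq_mul_inv, Complex.ofReal_inv]
  have hK : HasDerivAt (fun t : ℝ => (2 - (1 + Real.exp (2*t))) / (1 + Real.exp (2*t)))
      ((-(2 * Real.exp (2*u)) * (1+Real.exp (2*u)) - (2 - (1+Real.exp (2*u))) * (2*Real.exp (2*u))) / (1+Real.exp (2*u))^2) u := by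
    exact (((hasDerivAt_const u (2:ℝ)).sub hT').div hT' hTne).congr_deriv (by simp only [Pi.sub_apply]; ring)
  have hY2 : HasFDerivAt (fun w : ℂ => (2 - (1 + Real.exp (2*w.re))) / (1 + Real.exp (2*w.re)))
      (((-(2 * Real.exp (2*u)) * (1+Real.exp (2*u)) - (2 - (1+Real.exp (2*u))) * (2*Real.exp (2*u))) / (1+Real.exp (2*u))^2) • Complex.reCLM) z := by
    have := hK.comp_hasFDerivAt z Complex.reCLM.hasFDerivAt; exact this
  have hYd : HasFDerivAt Y (ContinuousLinearMap.prod
      ((2 * Complex.exp z) •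
          Complex.ofRealCLM.comp ((-(2 * Real.exp (2*u)) / (1+Real.exp (2*u))^2) • Complex.reCLM) +
        (((1 + Real.exp (2*z.re))⁻¹ : ℝ) : ℂ) •
          (2:ℂ) • ContinuousLinearMap.restrictScalars ℝ
            (ContinuousLinearMap.smulRight (1 : ℂ →L[ℂ] ℂ) (Complex.exp z)))
      (((-(2 * Real.exp (2*u)) * (1+Real.exp (2*u)) - (2 - (1+Real.exp (2*u))) * (2*Real.exp (2*u))) / (1+Real.exp (2*u))^2) • Complex.reCLM)) z := HasFDerivAt.prodMk hY1 hY2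
  have ev1 : pdv1 Y z
      = (2 * Complex.exp z * ((-(2 * Real.exp (2*u)) / (1+Real.exp (2*u))^2 : ℝ) : ℂ)
          + (((1 + Real.exp (2*u))⁻¹ : ℝ) : ℂ) * (2 * Complex.exp z), (-(2 * Real.exp (2*u)) * (1+Real.exp (2*u)) - (2 - (1+Real.exp (2*u))) * (2*Real.exp (2*u))) / (1+Real.exp (2*u))^2) := by
    rw [pdv1, hYd.fderiv]
    simp [Complex.real_smul]
    rw [hu]
  have ev2 : pdv2 Y z
      = ((((1 + Real.exp (2*u))⁻¹ : ℝ) : ℂ) * (2 * Complex.exp z * Complex.I), 0) := by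
    rw [pdv2, hYd.fderiv]
    simp [Complex.real_smul, mul_comm, mul_assoc, mul_left_comm]
    rw [hu]
  have hLz : L z = 4 * Real.exp (2*u) / (1 + Real.exp (2*u))^2 := rfl
  have hhz : h z = (a₂ + c₁ * u + Real.exp (2*u) * (a₃ + c₂ * u)) / (1 + Real.exp (2*u)) := rfl
  have hYz : Y z = (2 * Complex.exp z / (((1 + Real.exp (2*u)) : ℝ) : ℂ),
      (2 - (1 + Real.exp (2*u))) / (1 + Real.exp (2*u))) := rfl
  show (pd1 h z / L z) • pdv1 Y z + (pd2 h z / L z) • pdv2 Y z + h z • Y z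
      = (((Real.exp (-u) * (Real.exp (2*u) * (2 * a₂ + 2 * a₃ + c₂ - c₂ * Real.exp (2*u) + 2 * c₂ * u) + c₁ * (1 + Real.exp (2*u) * (2 * u - 1))) / (2 * (1 + Real.exp (2*u))) * Real.cos z.im : ℝ) : ℂ) + ((Real.exp (-u) * (Real.exp (2*u) * (2 * a₂ + 2 * a₃ + c₂ - c₂ * Real.exp (2*u) + 2 * c₂ * u) + c₁ * (1 + Real.exp (2*u) * (2 * u - 1))) / (2 * (1 + Real.exp (2*u))) * Real.sin z.im : ℝ) : ℂ) * Complex.I,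
        (a₂ + c₁ * (u - 1) - Real.exp (2*u) * (a₃ + c₂ + c₂ * u)) / (1 + Real.exp (2*u)))
  rw [e1, e2, ev1, ev2, hLz, hhz, hYz]
  have h2u : Real.exp (2*u) = Real.exp u * Real.exp u := by rw [two_mul, Real.exp_add]
  have hnu : Real.exp (-u) = (Real.exp u)⁻¹ := Real.exp_neg u
  have hexpz : Complex.exp z
      = ((Real.exp u : ℝ) : ℂ) * (((Real.cos z.im : ℝ) : ℂ) + ((Real.sin z.im : ℝ) : ℂ) * Complex.I) := by
    rw [Complex.exp_eq_exp_re_mul_sin_add_cos]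
    simp [← Complex.ofReal_exp, ← Complex.ofReal_cos, ← Complex.ofReal_sin]
    exact Or.inl hu.symm
  simp only [hexpz, Prod.smul_mk, Prod.mk_add_mk, Prod.mk.injEq, Complex.real_smul,
    smul_eq_mul, zero_div, Complex.ofReal_zero, zero_mul, mul_zero, add_zero, zero_add]
  constructor
  · -- complex component
    set cv := Real.cos z.im with hcv
    set sv := Real.sin z.im with hsv
    have key : ((((c₁ + (2 * Real.exp (2*u) * (a₃+c₂*u) + Real.exp (2*u) * c₂)) * (1+Real.exp (2*u)) - (a₂ + c₁*u + Real.exp (2*u)*(a₃+c₂*u)) * (2*Real.exp (2*u))) / (1+Real.exp (2*u))^2) / (4 * Real.exp (2*u) / (1 + Real.exp (2*u))^2)) * (2 * Real.exp u * (-(2 * Real.exp (2*u)) / (1+Real.exp (2*u))^2) + (1 + Real.exp (2*u))⁻¹ * (2 * Real.exp u)) + ((a₂ + c₁ * u + Real.exp (2*u) * (a₃ + c₂ * u)) / (1 + Real.exp (2*u))) * (2 * Real.exp u / (1 + Real.exp (2*u))) = Real.exp (-u) * (Real.exp (2*u) * (2 * a₂ + 2 * a₃ + c₂ - c₂ * Real.exp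 (2*u) + 2 * c₂ * u) + c₁ * (1 + Real.exp (2*u) * (2 * u - 1))) / (2 * (1 + Real.exp (2*u))) := by
      rw [h2u, hnu]
      have hA : (0:ℝ) < Real.exp u := Real.exp_pos u
      generalize Real.exp u = A at hA ⊢
      have h1 : A ≠ 0 := hA.ne'
      have h2 : (1 + A * A) ≠ 0 := by positivity
      field_simp
      ring
    trans (((((((c₁ + (2 * Real.exp (2*u) * (a₃+c₂*u) + Real.exp (2*u) * c₂)) * (1+Real.exp (2*u)) - (a₂ + c₁*u + Real.exp (2*u)*(a₃+c₂*u)) * (2*Real.exp (2*u))) / (1+Real.exp (2*u))^2) / (4 * Real.exp (2*u) / (1 + Real.exp (2*u))^2)) * (2 * Real.exp u * (-(2 * Real.exp (2*u)) / (1+Real.exp (2*u))^2) + (1 + Real.exp (2*u))⁻¹ * (2 * Real.exp u)) + ((a₂ + c₁ * u + Real.exp (2*u) * (a₃ + c₂ * u)) / (1 + Real.exp (2*u))) * (2 * Real.exp u / (1 + Real.exp (2*u))) : ℝ) : ℂ) * ((cv : ℂ) + (sv : ℂ) * Complex.I))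
    · simp only [Complex.ofReal_div, Complex.ofReal_mul, Complex.ofReal_add,
        Complex.ofReal_sub, Complex.ofReal_neg, Complex.ofReal_inv, Complex.ofReal_pow,
        Complex.ofReal_one, Complex.ofReal_ofNat]
      ring
    · rw [key]
      simp only [Complex.ofReal_mul]
      ring
  · -- real component
    have hA : (0:ℝ) < Real.exp (2*u) := Real.exp_pos _
    generalize Real.exp (2*u) = E at hA ⊢
    have h1 : (1 + E) ≠ 0 := by positivity
    have h2 : E ≠ 0 := hA.ne'
    field_simp
    ring
end
end
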